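/- arXiv:2208.00122 — 9 statements merged into one kernel-verified Lean document; each statement's English description precedes it below -/
import Mathlib

section
/- For real numbers a, b and any even integer k ≥ 2, we have ∑_{i=0}^{k} a^i b^{k−i} ≥ (1/2)(a^k + b^k). -/
theorem sum_pow_ge_half_extremes (a b : ℝ) (k : ℕ) (hk : 2 ≤ k) (hke : Even k) :
    (1 / 2) * (a ^ k + b ^ k) ≤ ∑ i ∈ Finset.range (k + 1), a ^ i * b ^ (k - i) := by
  obtain ⟨m, rfl⟩ := hke
  have hQ0 : 0 ≤ ∑ j ∈ Finset.range m, (a ^ 2) ^ j * (b ^ 2) ^ (m - 1 - j) :=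
    Finset.sum_nonneg fun j _ =>
      mul_nonneg (pow_nonneg (sq_nonneg a) _) (pow_nonneg (sq_nonneg b) _)
  by_cases hab : a = b
  · subst hab
    have hsum : ∑ i ∈ Finset.range (m + m + 1), a ^ i * a ^ (m + m - i)
        = (m + m + 1 : ℝ) * a ^ (m + m) := by
      have h : ∀ i ∈ Finset.range (m + m + 1), a ^ i * a ^ (m + m - i) = a ^ (m + m) := by
        intro i hi
        rw [← pow_add]
        congr 1
        have := Finset.mem_range.mp hi
        omega
      rw [Finset.sum_congr rfl h, Finset.sum_const]
      simp [mul_comm]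
    rw [hsum]
    have ha : 0 ≤ a ^ (m + m) := Even.pow_nonneg ⟨m, rfl⟩ a
    nlinarith
  · have h1 : (∑ i ∈ Finset.range (m + m + 1), a ^ i * b ^ (m + m - i)) * (a - b)
        = a ^ (m + m + 1) - b ^ (m + m + 1) := by
      simpa using geom_sum₂_mul a b (m + m + 1)
    have h2 := geom_sum₂_mul (a ^ 2) (b ^ 2) m
    have hne : a - b ≠ 0 := sub_ne_zero.mpr hab
    have key : ((∑ i ∈ Finset.range (m + m + 1), a ^ i * b ^ (m + m - i))
          - (1 / 2) * (a ^ (m + m) + b ^ (m + m))) * (a - b)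
        = ((1 / 2) * (a + b) ^ 2 * ∑ j ∈ Finset.range m, (a ^ 2) ^ j * (b ^ 2) ^ (m - 1 - j))
          * (a - b) := by
      linear_combination h1 - (1 / 2) * (a + b) * h2
    have := mul_right_cancel₀ hne key
    nlinarith [sq_nonneg (a + b)]
end

section
/- For real numbers a, b and any odd integer k ≥ 1, (a − b)^{2k} ≤ 2^{2(k−1)} (a^k − b^k)². -/
lemma key0 (k : ℕ) (hk : k ≠ 0) (x y : ℝ) (hy : 0 ≤ y) (hxy : y ≤ x) :
    (x - y) ^ k ≤ 2 ^ (k - 1) * (x ^ k - y ^ k) := by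
  have h1 : (x - y) ^ k + y ^ k ≤ x ^ k := by
    have := pow_add_pow_le (x := x - y) (y := y) (by linarith) hy hk
    simpa using this
  have h2 : (1 : ℝ) ≤ 2 ^ (k - 1) := one_le_pow₀ (by norm_num)
  nlinarith [pow_le_pow_left₀ hy hxy k]

lemma key (k : ℕ) (hk : k ≠ 0) (hko : Odd k) (x y : ℝ) (hxy : y ≤ x) :
    (x - y) ^ k ≤ 2 ^ (k - 1) * (x ^ k - y ^ k) := by
  rcases le_or_gt 0 y with hy | hy
  · exact key0 k hk x y hy hxy
  rcases le_or_gt x 0 with hx | hx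
  · have := key0 k hk (-y) (-x) (by linarith) (by linarith)
    rw [hko.neg_pow, hko.neg_pow] at this
    have e : -y - -x = x - y := by ring
    rw [e] at this
    linarith
  · have := add_pow_le hx.le (by linarith : (0:ℝ) ≤ -y) k
    rw [hko.neg_pow] at this
    have e : x + -y = x - y := by ring
    rw [e] at this
    linarith

theorem sub_pow_le_of_odd (a b : ℝ) (k : ℕ) (hk : 1 ≤ k) (hko : Odd k) :
    (a - b) ^ (2 * k) ≤ 2 ^ (2 * (k - 1)) * (a ^ k - b ^ k) ^ 2 := by
  have main : ∀ x y : ℝ, y ≤ x →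
      (x - y) ^ (2 * k) ≤ 2 ^ (2 * (k - 1)) * (x ^ k - y ^ k) ^ 2 := by
    intro x y hxy
    have h := key k (by omega) hko x y hxy
    have hnn : 0 ≤ (x - y) ^ k := pow_nonneg (by linarith) k
    calc (x - y) ^ (2 * k) = ((x - y) ^ k) ^ 2 := by rw [← pow_mul, mul_comm]
      _ ≤ (2 ^ (k - 1) * (x ^ k - y ^ k)) ^ 2 := by
          apply sq_le_sq' <;> nlinarith
      _ = 2 ^ (2 * (k - 1)) * (x ^ k - y ^ k) ^ 2 := by
          rw [mul_pow, ← pow_mul, mul_comm (k-1) 2]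
  rcases le_total b a with h | h
  · exact main a b h
  · have := main b a h
    have e1 : (b - a) ^ (2 * k) = (a - b) ^ (2 * k) := by
      rw [show b - a = -(a - b) by ring, neg_pow]
      simp [Nat.even_mul]
    have e2 : (b ^ k - a ^ k) ^ 2 = (a ^ k - b ^ k) ^ 2 := by ring
    rw [e1, e2] at this
    exact this
end

section
/- For real numbers a, b and any integer k ≥ 1, (a² − b²)^{2k} ≤ 2^{2(k−1)} (a^{2k} − b^{2k})². -/
lemma aux_pow (x y : ℝ) (hy : 0 ≤ y) (hxy : y ≤ x) (k : ℕ) (hk : k ≠ 0) :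
    (x - y) ^ (2 * k) ≤ (x ^ k - y ^ k) ^ 2 := by
  have hx : 0 ≤ x - y := sub_nonneg.2 hxy
  have h1 : (x - y) ^ k + y ^ k ≤ (x - y + y) ^ k := pow_add_pow_le hx hy hk
  rw [sub_add_cancel] at h1
  have h2 : (x - y) ^ k ≤ x ^ k - y ^ k := by linarith
  have h3 : ((x - y) ^ k) ^ 2 ≤ (x ^ k - y ^ k) ^ 2 :=
    pow_le_pow_left₀ (pow_nonneg hx k) h2 2
  calc (x - y) ^ (2 * k) = ((x - y) ^ k) ^ 2 := by rw [← pow_mul, mul_comm]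
    _ ≤ _ := h3

theorem sq_sub_sq_pow_le (a b : ℝ) (k : ℕ) (hk : 1 ≤ k) :
    (a ^ 2 - b ^ 2) ^ (2 * k) ≤ 2 ^ (2 * (k - 1)) * (a ^ (2 * k) - b ^ (2 * k)) ^ 2 := by
  have hk0 : k ≠ 0 := by omega
  have hone : (1 : ℝ) ≤ 2 ^ (2 * (k - 1)) := one_le_pow₀ one_le_two
  have key : (a ^ 2 - b ^ 2) ^ (2 * k) ≤ (a ^ (2 * k) - b ^ (2 * k)) ^ 2 := by
    rcases le_total (b ^ 2) (a ^ 2) with h | h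
    · have := aux_pow (a ^ 2) (b ^ 2) (sq_nonneg b) h k hk0
      rwa [← pow_mul, ← pow_mul] at this
    · have := aux_pow (b ^ 2) (a ^ 2) (sq_nonneg a) h k hk0
      rw [← pow_mul, ← pow_mul] at this
      calc (a ^ 2 - b ^ 2) ^ (2 * k) = (b ^ 2 - a ^ 2) ^ (2 * k) := by
            rw [show a ^ 2 - b ^ 2 = -(b ^ 2 - a ^ 2) by ring,
              Even.neg_pow (even_two_mul k)]
        _ ≤ (b ^ (2 * k) - a ^ (2 * k)) ^ 2 := this
        _ = (a ^ (2 * k) - b ^ (2 * k)) ^ 2 := by ring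
  nlinarith [sq_nonneg (a ^ (2 * k) - b ^ (2 * k))]
end

section
/- Let A be an n × r real matrix of rank r whose entries are rationals of bit complexity at most N. Then the r-th largest (i.e., smallest nonzero) singular value of A is at least 2^{−O(N n³)}. -/
/-!
Multiplying `A` by the product `D` of all denominators gives an integer matrix `M = D • A`,
whose Gram matrix `G = Mᵀ * M` is an integer matrix, nonsingular since `A` has full column
rank; hence `|det G| ≥ 1`. Applying `adjugate G` to `G x` recovers `det G • x`, so
`‖x‖ ≤ |det G| ‖x‖ ≤ ‖adjugate G‖_F ‖Mᵀ‖_F ‖M x‖ = |D| ‖adjugate G‖_F ‖Mᵀ‖_F ‖A x‖`.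
The entries of `M` are at most `2^{N(nr+1)}`, those of `G` at most `n 2^{2N(nr+1)}`, and the
Leibniz expansion bounds those of `adjugate G` by `r! (n 2^{2N(nr+1)})^r`; altogether the
factor in front of `‖A x‖` is `2^{O(N n³)}`.
-/

open Matrix Finset

variable {m k R : Type*} [Fintype m]

section OrderedRing

variable [CommRing R] [LinearOrder R] [IsStrictOrderedRing R]

lemma sum_sq_mulVec_le [Fintype k] (P : Matrix m k R) {b : R} (hP : ∀ i j, |P i j| ≤ b)
    (v : k → R) :
    ∑ i, (P *ᵥ v) i ^ 2 ≤ Fintype.card m * Fintype.card k * b ^ 2 * ∑ j, v j ^ 2 := by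
  have hrow (i : m) : (P *ᵥ v) i ^ 2 ≤ Fintype.card k * b ^ 2 * ∑ j, v j ^ 2 := calc
    (P *ᵥ v) i ^ 2 ≤ (∑ j, P i j ^ 2) * ∑ j, v j ^ 2 := by
      simpa [mulVec, dotProduct] using sum_mul_sq_le_sq_mul_sq univ (P i) v
    _ ≤ (∑ _j : k, b ^ 2) * ∑ j, v j ^ 2 := by
      refine mul_le_mul_of_nonneg_right (sum_le_sum fun j _ => ?_) (by positivity)
      exact sq_le_sq' (neg_le_of_abs_le (hP i j)) (le_of_abs_le (hP i j))
    _ = _ := by simp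
  calc ∑ i, (P *ᵥ v) i ^ 2 ≤ ∑ _i : m, Fintype.card k * b ^ 2 * ∑ j, v j ^ 2 :=
        sum_le_sum fun i _ => hrow i
    _ = _ := by simp [mul_assoc]

lemma abs_transpose_mul_self_apply_le (P : Matrix m k R) {B : R} (hP : ∀ i j, |P i j| ≤ B)
    (i j : k) : |(Pᵀ * P) i j| ≤ Fintype.card m * B ^ 2 := calc
  |(Pᵀ * P) i j| ≤ ∑ l, |P l i| * |P l j| := by
      simpa [mul_apply, abs_mul] using abs_sum_le_sum_abs (fun l => P l i * P l j) univ
  _ ≤ ∑ _l : m, B * B := by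
      gcongr with l
      exacts [(abs_nonneg _).trans (hP l i), hP l i, hP l j]
  _ = _ := by simp [sq]

lemma abs_adjugate_apply_le [Fintype k] [DecidableEq k] (G : Matrix k k R) {b : R}
    (hG : ∀ i j, |G i j| ≤ b) (hb : 1 ≤ b) (i j : k) :
    |adjugate G i j| ≤ (Fintype.card k).factorial * b ^ Fintype.card k := by
  have hent (p q : k) : |(G.updateRow j (Pi.single i 1)) p q| ≤ b := by
    rw [updateRow_apply]
    split_ifs
    · rw [Pi.single_apply]
      split_ifs <;> simp [hb, zero_le_one.trans hb]
    · exact hG p q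
  simpa [adjugate_apply, nsmul_eq_mul] using det_le (abv := AbsoluteValue.abs) hent

lemma det_sq_mul_sum_sq_le [Fintype k] [DecidableEq k] (G : Matrix k k R) {b : R}
    (hG : ∀ i j, |adjugate G i j| ≤ b) (v : k → R) :
    G.det ^ 2 * ∑ j, v j ^ 2 ≤
      Fintype.card k * Fintype.card k * b ^ 2 * ∑ j, (G *ᵥ v) j ^ 2 := calc
  G.det ^ 2 * ∑ j, v j ^ 2 = ∑ j, (adjugate G *ᵥ (G *ᵥ v)) j ^ 2 := by
    simp [mulVec_mulVec, adjugate_mul, smul_mulVec, mul_sum, mul_pow]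
  _ ≤ _ := sum_sq_mulVec_le _ hG _

lemma sum_sq_le_of_one_le_abs_det [Fintype k] [DecidableEq k] [Nonempty m] [Nonempty k]
    (P : Matrix m k R) {B : R} (hB : 1 ≤ B) (hP : ∀ i j, |P i j| ≤ B)
    (hdet : 1 ≤ |(Pᵀ * P).det|) (v : k → R) :
    ∑ j, v j ^ 2 ≤
      (Fintype.card k * Fintype.card m * B) ^ (4 * (Fintype.card k + 1)) *
        ∑ i, (P *ᵥ v) i ^ 2 := by
  set c := Fintype.card k
  set d := Fintype.card m
  have hc : (1 : R) ≤ c := by exact_mod_cast Fintype.card_pos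
  have hd : (1 : R) ≤ d := by exact_mod_cast Fintype.card_pos
  have hG := abs_transpose_mul_self_apply_le P hP
  have hadj := abs_adjugate_apply_le _ hG (one_le_mul_of_one_le_of_one_le hd (one_le_pow₀ hB))
  have hfact : (c.factorial : R) ≤ c ^ c := by exact_mod_cast Nat.factorial_le_pow c
  calc ∑ j, v j ^ 2 ≤ (Pᵀ * P).det ^ 2 * ∑ j, v j ^ 2 := by
        refine le_mul_of_one_le_left (by positivity) ?_
        rwa [one_le_sq_iff_one_le_abs]
    _ ≤ c * c * (c.factorial * (d * B ^ 2) ^ c) ^ 2 * ∑ j, ((Pᵀ * P) *ᵥ v) j ^ 2 :=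
        det_sq_mul_sum_sq_le _ hadj v
    _ ≤ c * c * (c.factorial * (d * B ^ 2) ^ c) ^ 2 * (c * d * B ^ 2 * ∑ i, (P *ᵥ v) i ^ 2) := by
        rw [← mulVec_mulVec]
        gcongr
        exact sum_sq_mulVec_le Pᵀ (fun i j => hP j i) _
    _ ≤ c * c * (c ^ c * (d * B ^ 2) ^ c) ^ 2 * (c * d * B ^ 2) * ∑ i, (P *ᵥ v) i ^ 2 := by
        rw [← mul_assoc]
        gcongr
    _ = c ^ (2 * c + 3) * d ^ (2 * c + 1) * B ^ (4 * c + 2) * ∑ i, (P *ᵥ v) i ^ 2 := by ring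
    _ ≤ c ^ (4 * (c + 1)) * d ^ (4 * (c + 1)) * B ^ (4 * (c + 1)) * ∑ i, (P *ᵥ v) i ^ 2 := by
        gcongr <;> first | assumption | omega
    _ = _ := by rw [mul_pow, mul_pow]

end OrderedRing

lemma det_transpose_mul_self_ne_zero {K : Type*} [Field K] [LinearOrder K]
    [IsStrictOrderedRing K] [Fintype k] [DecidableEq k] (A : Matrix m k K)
    (hA : A.rank = Fintype.card k) :
    (Aᵀ * A).det ≠ 0 := by
  intro hdet
  obtain ⟨v, hv, hAv⟩ := exists_mulVec_eq_zero_iff.mpr hdet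
  have hker : LinearMap.ker A.mulVecLin = ⊥ := by
    have := LinearMap.finrank_range_add_finrank_ker A.mulVecLin
    rw [rank] at hA
    rw [hA, Module.finrank_fintype_fun_eq_card] at this
    exact Submodule.finrank_eq_zero.mp (by omega)
  rw [← ker_mulVecLin_transpose_mul_self, LinearMap.ker_eq_bot'] at hker
  exact hv (hker v hAv)

lemma one_le_abs_det_transpose_mul_self_map_intCast [Fintype k] [DecidableEq k]
    (M : Matrix m k ℤ) (hM : (M.map ((↑) : ℤ → ℝ)).rank = Fintype.card k) :
    (1 : ℝ) ≤ |((M.map ((↑) : ℤ → ℝ))ᵀ * M.map ((↑) : ℤ → ℝ)).det| := by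
  have hcast : ((M.map ((↑) : ℤ → ℝ))ᵀ * M.map ((↑) : ℤ → ℝ)).det = ((Mᵀ * M).det : ℝ) := by
    rw [Int.cast_det, ← transpose_map]
    exact congrArg det (Matrix.map_mul (f := Int.castRingHom ℝ)).symm
  have hne : (Mᵀ * M).det ≠ 0 := by
    have := det_transpose_mul_self_ne_zero _ hM
    rw [hcast] at this
    exact_mod_cast this
  rw [hcast]
  exact_mod_cast Int.one_le_abs hne

lemma exists_int_matrix_eq_smul_of_rat_entries [Fintype k] (A : Matrix m k ℝ) {B : ℤ}
    (hA : ∀ i j, ∃ p q : ℤ, q ≠ 0 ∧ |p| ≤ B ∧ |q| ≤ B ∧ A i j = p / q) :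
    ∃ D : ℤ, D ≠ 0 ∧ |D| ≤ B ^ (Fintype.card m * Fintype.card k) ∧ ∃ M : Matrix m k ℤ,
      (∀ i j, |M i j| ≤ B ^ (Fintype.card m * Fintype.card k + 1)) ∧
        M.map ((↑) : ℤ → ℝ) = (D : ℝ) • A := by
  classical
  choose p q hq hpB hqB hpq using hA
  set D := ∏ e : m × k, q e.1 e.2
  set M : Matrix m k ℤ := of fun i j => p i j * ∏ e ∈ univ.erase (i, j), q e.1 e.2
  have hqM (i : m) (j : k) : q i j * M i j = p i j * D := by
    simp only [M, D, of_apply,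
      ← mul_prod_erase univ (fun e : m × k => q e.1 e.2) (mem_univ (i, j))]
    ring
  have hDB : |D| ≤ B ^ (Fintype.card m * Fintype.card k) := calc
    |D| = ∏ e : m × k, |q e.1 e.2| := abs_prod _ _
    _ ≤ ∏ _e : m × k, B := prod_le_prod (fun _ _ => abs_nonneg _) fun e _ => hqB e.1 e.2
    _ = _ := by simp
  refine ⟨D, prod_ne_zero_iff.mpr fun e _ => hq e.1 e.2, hDB, M, fun i j => ?_, ?_⟩
  · calc |M i j| ≤ |q i j| * |M i j| :=
        le_mul_of_one_le_left (abs_nonneg _) (Int.one_le_abs (hq i j))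
    _ = |p i j| * |D| := by rw [← abs_mul, ← abs_mul, hqM]
    _ ≤ B * B ^ (Fintype.card m * Fintype.card k) :=
        mul_le_mul (hpB i j) hDB (abs_nonneg _) ((abs_nonneg _).trans (hpB i j))
    _ = _ := by ring
  · ext i j
    have hq' : (q i j : ℝ) ≠ 0 := by exact_mod_cast hq i j
    have hqM' : (q i j : ℝ) * M i j = p i j * D := by exact_mod_cast hqM i j
    rw [map_apply, Matrix.smul_apply, smul_eq_mul, hpq, ← mul_div_assoc, eq_div_iff hq',
      mul_comm, hqM', mul_comm]

lemma mul_pow_mul_pow_sq_le_pow_cube {b n r : ℕ} (hb : 2 ≤ b) (hr : 0 < r) (hrn : r ≤ n) :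
    (r * n * b ^ (n * r + 1)) ^ (4 * (r + 1)) * (b ^ (n * r)) ^ 2 ≤ b ^ (40 * n ^ 3) := by
  have hrn2 : r * n ≤ b ^ (2 * n) := calc
    r * n ≤ 2 ^ n * 2 ^ n :=
      Nat.mul_le_mul (hrn.trans Nat.lt_two_pow_self.le) Nat.lt_two_pow_self.le
    _ ≤ b ^ n * b ^ n := by gcongr
    _ = b ^ (2 * n) := by ring
  have hexp : (2 * n + (n * r + 1)) * (4 * (r + 1)) + n * r * 2 ≤ 40 * n ^ 3 := by
    have h1 : 1 ≤ n := hr.trans_le hrn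
    have h2 : r + 1 ≤ 2 * n := by omega
    have h3 : n * r ≤ n * n := Nat.mul_le_mul_left n hrn
    nlinarith
  calc (r * n * b ^ (n * r + 1)) ^ (4 * (r + 1)) * (b ^ (n * r)) ^ 2
      ≤ (b ^ (2 * n) * b ^ (n * r + 1)) ^ (4 * (r + 1)) * (b ^ (n * r)) ^ 2 := by gcongr
    _ = b ^ ((2 * n + (n * r + 1)) * (4 * (r + 1)) + n * r * 2) := by
        rw [← pow_add, ← pow_mul, ← pow_mul, ← pow_add]
    _ ≤ b ^ (40 * n ^ 3) := Nat.pow_le_pow_right (by omega) hexp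

theorem sum_sq_le_pow_mul_sum_sq_mulVec_of_rat_entries {N n r : ℕ} (hN : 0 < N)
    (A : Matrix (Fin n) (Fin r) ℝ) (hA : A.rank = r)
    (hAent : ∀ i j, ∃ p q : ℤ, q ≠ 0 ∧ |p| ≤ 2 ^ N ∧ |q| ≤ 2 ^ N ∧ A i j = p / q)
    (v : Fin r → ℝ) :
    ∑ j, v j ^ 2 ≤ ((2 : ℝ) ^ N) ^ (40 * n ^ 3) * ∑ i, (A *ᵥ v) i ^ 2 := by
  obtain rfl | hr := r.eq_zero_or_pos
  · simp
  have hrn : r ≤ n := by simpa [hA] using A.rank_le_card_height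
  have : Nonempty (Fin r) := ⟨⟨0, hr⟩⟩
  have : Nonempty (Fin n) := ⟨⟨0, hr.trans_le hrn⟩⟩
  obtain ⟨D, hD, hDB, M, hMB, hMA⟩ := exists_int_matrix_eq_smul_of_rat_entries A hAent
  simp only [Fintype.card_fin] at hDB hMB
  set B : ℝ := (2 : ℝ) ^ N
  set P := M.map ((↑) : ℤ → ℝ)
  have hPrank : P.rank = Fintype.card (Fin r) := by
    rw [hMA, rank_smul_of_mem_nonZeroDivisors _ (mem_nonZeroDivisors_of_ne_zero
      (by exact_mod_cast hD)), hA, Fintype.card_fin]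
  have hPB (i j) : |P i j| ≤ B ^ (n * r + 1) := by
    simpa [P, B] using (Int.cast_le (R := ℝ)).mpr (hMB i j)
  have hD2 : (D : ℝ) ^ 2 ≤ (B ^ (n * r)) ^ 2 := by
    have : |(D : ℝ)| ≤ B ^ (n * r) := by simpa [B] using (Int.cast_le (R := ℝ)).mpr hDB
    exact sq_le_sq' (neg_le_of_abs_le this) (le_of_abs_le this)
  have hK :
      (r * n * B ^ (n * r + 1)) ^ (4 * (r + 1)) * (B ^ (n * r)) ^ 2 ≤ B ^ (40 * n ^ 3) := by
    have := mul_pow_mul_pow_sq_le_pow_cube (Nat.le_self_pow hN.ne' 2) hr hrn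
    simp only [B]
    exact_mod_cast this
  calc ∑ j, v j ^ 2 ≤ (r * n * B ^ (n * r + 1)) ^ (4 * (r + 1)) * ∑ i, (P *ᵥ v) i ^ 2 := by
        simpa using sum_sq_le_of_one_le_abs_det P (one_le_pow₀ (one_le_pow₀ one_le_two)) hPB
          (one_le_abs_det_transpose_mul_self_map_intCast M hPrank) v
    _ = (r * n * B ^ (n * r + 1)) ^ (4 * (r + 1)) * (D : ℝ) ^ 2 * ∑ i, (A *ᵥ v) i ^ 2 := by
        simp only [P, hMA, smul_mulVec, Pi.smul_apply, smul_eq_mul, mul_pow, ← mul_sum]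
        ring
    _ ≤ B ^ (40 * n ^ 3) * ∑ i, (A *ᵥ v) i ^ 2 := by
        gcongr
        exact (mul_le_mul_of_nonneg_left hD2 (by positivity)).trans hK

/-- A full column rank `n × r` real matrix whose entries are rationals of bit
complexity at most `N` has its smallest (the `r`-th) singular value bounded
below by `2^{-O(N n³)}`: there is a universal constant `C > 0` such that
`‖A x‖ ≥ 2^{-C·N·n³}` for every unit vector `x`. -/
theorem rank_bit_complexity_singular_value_lower_bound :
    ∃ C : ℝ, 0 < C ∧ ∀ (N n r : ℕ) (A : Matrix (Fin n) (Fin r) ℝ),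
      0 < N → A.rank = r →
      (∀ i j, ∃ p q : ℤ, q ≠ 0 ∧ |p| ≤ 2 ^ N ∧ |q| ≤ 2 ^ N ∧ A i j = (p : ℝ) / (q : ℝ)) →
      ∀ x : Fin r → ℝ, (∑ j, x j ^ 2) = 1 →
        (2 : ℝ) ^ (-(C * (N : ℝ) * (n : ℝ) ^ 3)) ≤ Real.sqrt (∑ i, (A.mulVec x i) ^ 2) := by
  refine ⟨20, by norm_num, fun N n r A hN hA hAent x hx => Real.le_sqrt_of_sq_le ?_⟩
  have h := sum_sq_le_pow_mul_sum_sq_mulVec_of_rat_entries hN A hA hAent x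
  rw [hx, ← inv_le_iff_one_le_mul₀' (by positivity : (0 : ℝ) < ((2 : ℝ) ^ N) ^ (40 * n ^ 3))]
    at h
  calc ((2 : ℝ) ^ (-(20 * (N : ℝ) * (n : ℝ) ^ 3))) ^ 2
      = (2 : ℝ) ^ (-((N * (40 * n ^ 3) : ℕ) : ℝ)) := by
        rw [← Real.rpow_natCast, ← Real.rpow_mul zero_le_two]
        push_cast
        ring_nf
    _ = (((2 : ℝ) ^ N) ^ (40 * n ^ 3))⁻¹ := by
        rw [Real.rpow_neg zero_le_two, Real.rpow_natCast, pow_mul]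
    _ ≤ _ := h
end

section
/- Let A, E ∈ ℝ^{m×n} with m ≥ n, rank(A) = n, and ‖E‖ < σ_n(A) (spectral norm of E less than the smallest singular value of A). Then ‖(A+E)† − A†‖ ≤ √2 ‖E‖ / (σ_n(A)(σ_n(A) − ‖E‖)), where † denotes the Moore–Penrose pseudo-inverse. -/
/-!
Put `B = A + E` and let `P = B B†`, the orthogonal projection onto the range of `B`. From `A† A = 1`
and `Bᵀ (1 - P) = 0` one gets `(B† - A†) P = -A† E B†` and `(B† - A†) (1 - P) = A† A†ᵀ Eᵀ (1 - P)`.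
The C*-identity `‖X‖² = ‖X Xᵀ‖` applied to `X = B† - A† = X P + X (1 - P)` kills the cross terms, so
`‖B† - A†‖ ≤ ‖E‖ ‖A†‖ √(‖B†‖² + ‖A†‖²)`. Finally `‖A x‖ ≥ σ ‖x‖` and, by Weyl,
`‖B x‖ ≥ (σ - ‖E‖) ‖x‖`; hence `‖A†‖ ≤ 1 / σ ≤ 1 / (σ - ‖E‖)` and `‖B†‖ ≤ 1 / (σ - ‖E‖)`.
-/

open Matrix

/-- The spectral (ℓ²-operator) norm of a real matrix. -/
noncomputable def specNorm {m n : ℕ} (M : Matrix (Fin m) (Fin n) ℝ) : ℝ :=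
  ‖LinearMap.toContinuousLinearMap (Matrix.toEuclideanLin M)‖

/-- The smallest singular value of a real matrix (the infimum of `‖Mx‖` over
unit vectors `x`). -/
noncomputable def sigmaMin {m n : ℕ} (M : Matrix (Fin m) (Fin n) ℝ) : ℝ :=
  sInf ((fun x : EuclideanSpace ℝ (Fin n) => ‖Matrix.toEuclideanLin M x‖) '' {x | ‖x‖ = 1})

/-- The Moore–Penrose pseudo-inverse of a full column rank matrix. -/
noncomputable def pinv {m n : ℕ} (M : Matrix (Fin m) (Fin n) ℝ) :
    Matrix (Fin n) (Fin m) ℝ := (Mᵀ * M)⁻¹ * Mᵀ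

open scoped Matrix.Norms.L2Operator

section L2OpNorm

variable {m n : Type*} [Fintype m] [Fintype n] [DecidableEq n]

theorem norm_toEuclideanLin_le (M : Matrix m n ℝ) (x : EuclideanSpace ℝ n) :
    ‖toEuclideanLin M x‖ ≤ ‖M‖ * ‖x‖ :=
  (toEuclideanLin.trans LinearMap.toContinuousLinearMap M).le_opNorm x

theorem l2_opNorm_le_of_bound (M : Matrix m n ℝ) {c : ℝ} (hc : 0 ≤ c)
    (h : ∀ x, ‖toEuclideanLin M x‖ ≤ c * ‖x‖) : ‖M‖ ≤ c :=
  ContinuousLinearMap.opNorm_le_bound _ hc h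

variable [DecidableEq m]

theorem l2_opNorm_transpose (M : Matrix m n ℝ) : ‖Mᵀ‖ = ‖M‖ := by
  rw [← conjTranspose_eq_transpose_of_trivial, l2_opNorm_conjTranspose]

theorem l2_opNorm_mul_transpose_self (M : Matrix m n ℝ) : ‖M * Mᵀ‖ = ‖M‖ ^ 2 := by
  simpa [conjTranspose_eq_transpose_of_trivial, l2_opNorm_transpose, sq] using
    l2_opNorm_conjTranspose_mul_self Mᵀ

omit [DecidableEq m] in
theorem l2_opNorm_le_one_of_isSymm_of_isIdempotentElem {P : Matrix n n ℝ} (hsymm : P.IsSymm)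
    (hidem : IsIdempotentElem P) : ‖P‖ ≤ 1 := by
  have h : ‖P‖ ^ 2 = ‖P‖ := by rw [← l2_opNorm_mul_transpose_self, hsymm.eq, hidem.eq]
  nlinarith [norm_nonneg P]

theorem l2_opNorm_sq_le_of_isSymm_of_isIdempotentElem (X : Matrix m n ℝ) {P : Matrix n n ℝ}
    (hsymm : P.IsSymm) (hidem : IsIdempotentElem P) :
    ‖X‖ ^ 2 ≤ ‖X * P‖ ^ 2 + ‖X * (1 - P)‖ ^ 2 := by
  have hsplit : X * Xᵀ = X * P * (X * P)ᵀ + X * (1 - P) * (X * (1 - P))ᵀ := by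
    rw [transpose_mul, transpose_mul, hsymm.eq, (isSymm_one.sub hsymm).eq, ← Matrix.mul_assoc,
      ← Matrix.mul_assoc, Matrix.mul_assoc X P P, Matrix.mul_assoc X (1 - P) (1 - P), hidem.eq,
      hidem.one_sub.eq, Matrix.mul_sub, Matrix.mul_one, Matrix.sub_mul, add_sub_cancel]
  calc ‖X‖ ^ 2 = ‖X * Xᵀ‖ := (l2_opNorm_mul_transpose_self X).symm
    _ ≤ ‖X * P * (X * P)ᵀ‖ + ‖X * (1 - P) * (X * (1 - P))ᵀ‖ := hsplit ▸ norm_add_le _ _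
    _ = ‖X * P‖ ^ 2 + ‖X * (1 - P)‖ ^ 2 := by
      rw [l2_opNorm_mul_transpose_self, l2_opNorm_mul_transpose_self]

end L2OpNorm

section BoundedBelow

variable {m n : Type*} [Fintype m] [Fintype n] [DecidableEq n]

theorem injective_mulVec_of_bounded_below (M : Matrix m n ℝ) {c : ℝ} (hc : 0 < c)
    (h : ∀ x, c * ‖x‖ ≤ ‖toEuclideanLin M x‖) : Function.Injective M.mulVec := by
  have hker : ∀ v, M *ᵥ v = 0 → v = 0 := by
    intro v hv
    have hcv := h (WithLp.toLp 2 v)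
    simp only [toLpLin_apply, hv, WithLp.toLp_zero, norm_zero] at hcv
    have hnorm : ‖WithLp.toLp 2 v‖ = 0 :=
      le_antisymm (nonpos_of_mul_nonpos_right hcv hc) (norm_nonneg _)
    simpa using hnorm
  intro x y hxy
  exact sub_eq_zero.1 (hker _ (by rw [mulVec_sub, hxy, sub_self]))

theorem isUnit_det_transpose_mul_self_of_bounded_below (M : Matrix m n ℝ) {c : ℝ} (hc : 0 < c)
    (h : ∀ x, c * ‖x‖ ≤ ‖toEuclideanLin M x‖) : IsUnit (Mᵀ * M).det := by
  rw [← isUnit_iff_isUnit_det, ← conjTranspose_eq_transpose_of_trivial]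
  exact (PosDef.conjTranspose_mul_self M (injective_mulVec_of_bounded_below M hc h)).isUnit

end BoundedBelow

theorem specNorm_eq_l2_opNorm {m n : ℕ} (M : Matrix (Fin m) (Fin n) ℝ) : specNorm M = ‖M‖ := rfl

theorem sigmaMin_mul_norm_le {m n : ℕ} (M : Matrix (Fin m) (Fin n) ℝ)
    (x : EuclideanSpace ℝ (Fin n)) :
    sigmaMin M * ‖x‖ ≤ ‖toEuclideanLin M x‖ := by
  rcases eq_or_ne x 0 with rfl | hx
  · simp
  have hx' : 0 < ‖x‖ := norm_pos_iff.2 hx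
  have hunit : ‖x‖⁻¹ • x ∈ {u : EuclideanSpace ℝ (Fin n) | ‖u‖ = 1} := norm_smul_inv_norm hx
  have hbdd :
      BddBelow ((fun u : EuclideanSpace ℝ (Fin n) => ‖toEuclideanLin M u‖) '' {u | ‖u‖ = 1}) :=
    ⟨0, by rintro _ ⟨u, -, rfl⟩; exact norm_nonneg _⟩
  have hle := csInf_le hbdd (Set.mem_image_of_mem _ hunit)
  rwa [map_smul, norm_smul, norm_inv, norm_norm, ← div_eq_inv_mul, le_div_iff₀ hx'] at hle

theorem sigmaMin_sub_l2_opNorm_mul_norm_le {m n : ℕ} (A E : Matrix (Fin m) (Fin n) ℝ)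
    (x : EuclideanSpace ℝ (Fin n)) :
    (sigmaMin A - ‖E‖) * ‖x‖ ≤ ‖toEuclideanLin (A + E) x‖ := by
  have hA := sigmaMin_mul_norm_le A x
  have hE := norm_toEuclideanLin_le E x
  have htri : ‖toEuclideanLin A x‖ ≤ ‖toEuclideanLin (A + E) x‖ + ‖toEuclideanLin E x‖ := by
    simpa using norm_sub_le (toEuclideanLin (A + E) x) (toEuclideanLin E x)
  linarith

section Pinv

variable {m n : ℕ} (M : Matrix (Fin m) (Fin n) ℝ)

theorem transpose_pinv : (pinv M)ᵀ = M * (Mᵀ * M)⁻¹ := by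
  rw [pinv, transpose_mul, transpose_transpose, transpose_nonsing_inv, transpose_mul,
    transpose_transpose]

theorem pinv_mul_self (h : IsUnit (Mᵀ * M).det) : pinv M * M = 1 := by
  rw [pinv, Matrix.mul_assoc, nonsing_inv_mul _ h]

theorem pinv_mul_transpose_pinv (h : IsUnit (Mᵀ * M).det) : pinv M * (pinv M)ᵀ = (Mᵀ * M)⁻¹ := by
  rw [transpose_pinv, pinv, Matrix.mul_assoc, ← Matrix.mul_assoc Mᵀ, mul_nonsing_inv _ h,
    Matrix.mul_one]

theorem transpose_mul_mul_pinv (h : IsUnit (Mᵀ * M).det) : Mᵀ * (M * pinv M) = Mᵀ := by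
  rw [pinv, ← Matrix.mul_assoc, ← Matrix.mul_assoc, mul_nonsing_inv _ h, Matrix.one_mul]

theorem isSymm_mul_pinv : (M * pinv M).IsSymm := by
  rw [IsSymm, transpose_mul, transpose_pinv, pinv, Matrix.mul_assoc]

theorem isIdempotentElem_mul_pinv (h : IsUnit (Mᵀ * M).det) : IsIdempotentElem (M * pinv M) := by
  rw [IsIdempotentElem, Matrix.mul_assoc, ← Matrix.mul_assoc (pinv M), pinv_mul_self M h,
    Matrix.one_mul]

theorem l2_opNorm_pinv_le_of_bounded_below {c : ℝ} (hc : 0 < c)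
    (h : ∀ x, c * ‖x‖ ≤ ‖toEuclideanLin M x‖) : ‖pinv M‖ ≤ c⁻¹ := by
  have hM := isUnit_det_transpose_mul_self_of_bounded_below M hc h
  have hproj : ‖M * pinv M‖ ≤ 1 :=
    l2_opNorm_le_one_of_isSymm_of_isIdempotentElem (isSymm_mul_pinv M)
      (isIdempotentElem_mul_pinv M hM)
  refine l2_opNorm_le_of_bound _ (inv_nonneg.2 hc.le) fun y => ?_
  rw [inv_mul_eq_div, le_div_iff₀' hc]
  calc c * ‖toEuclideanLin (pinv M) y‖ ≤ ‖toEuclideanLin M (toEuclideanLin (pinv M) y)‖ := h _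
    _ = ‖toEuclideanLin (M * pinv M) y‖ := by simp
    _ ≤ ‖M * pinv M‖ * ‖y‖ := norm_toEuclideanLin_le _ y
    _ ≤ ‖y‖ := mul_le_of_le_one_left (norm_nonneg y) hproj

end Pinv

section Perturbation

variable {m n : ℕ} {A B : Matrix (Fin m) (Fin n) ℝ}

theorem pinv_sub_pinv_mul_mul_pinv (hA : IsUnit (Aᵀ * A).det) (hB : IsUnit (Bᵀ * B).det) :
    (pinv B - pinv A) * (B * pinv B) = -(pinv A * (B - A) * pinv B) := by
  rw [Matrix.sub_mul, ← Matrix.mul_assoc, pinv_mul_self B hB, Matrix.one_mul, Matrix.mul_sub,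
    Matrix.sub_mul, pinv_mul_self A hA, Matrix.one_mul, ← Matrix.mul_assoc, neg_sub]

theorem pinv_sub_pinv_mul_one_sub_mul_pinv (hA : IsUnit (Aᵀ * A).det)
    (hB : IsUnit (Bᵀ * B).det) :
    (pinv B - pinv A) * (1 - B * pinv B)
      = pinv A * (pinv A)ᵀ * (B - A)ᵀ * (1 - B * pinv B) := by
  have hB0 : Bᵀ * (1 - B * pinv B) = 0 := by
    rw [Matrix.mul_sub, transpose_mul_mul_pinv B hB, Matrix.mul_one, sub_self]
  have hBB : pinv B * (1 - B * pinv B) = 0 := by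
    rw [Matrix.mul_sub, ← Matrix.mul_assoc, pinv_mul_self B hB, Matrix.mul_one, Matrix.one_mul,
      sub_self]
  rw [pinv_mul_transpose_pinv A hA, Matrix.sub_mul, hBB, zero_sub, transpose_sub, Matrix.mul_assoc,
    Matrix.sub_mul, hB0, zero_sub, Matrix.mul_neg, pinv, Matrix.mul_assoc]

theorem l2_opNorm_pinv_sub_pinv_le (hA : IsUnit (Aᵀ * A).det) (hB : IsUnit (Bᵀ * B).det) :
    ‖pinv B - pinv A‖ ≤ ‖B - A‖ * ‖pinv A‖ * √(‖pinv B‖ ^ 2 + ‖pinv A‖ ^ 2) := by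
  have hsymm := isSymm_mul_pinv B
  have hidem := isIdempotentElem_mul_pinv B hB
  have hrange : ‖(pinv B - pinv A) * (B * pinv B)‖ ≤ ‖B - A‖ * ‖pinv A‖ * ‖pinv B‖ := by
    rw [pinv_sub_pinv_mul_mul_pinv hA hB, norm_neg]
    calc ‖pinv A * (B - A) * pinv B‖ ≤ ‖pinv A‖ * ‖B - A‖ * ‖pinv B‖ :=
          (l2_opNorm_mul _ _).trans (by gcongr; exact l2_opNorm_mul _ _)
      _ = _ := by ring
  have hcompl : ‖(pinv B - pinv A) * (1 - B * pinv B)‖ ≤ ‖B - A‖ * ‖pinv A‖ * ‖pinv A‖ := by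
    have hQ : ‖1 - B * pinv B‖ ≤ 1 :=
      l2_opNorm_le_one_of_isSymm_of_isIdempotentElem (isSymm_one.sub hsymm) hidem.one_sub
    rw [pinv_sub_pinv_mul_one_sub_mul_pinv hA hB]
    calc ‖pinv A * (pinv A)ᵀ * (B - A)ᵀ * (1 - B * pinv B)‖
        ≤ ‖pinv A‖ * ‖(pinv A)ᵀ‖ * ‖(B - A)ᵀ‖ * ‖1 - B * pinv B‖ := by
          refine (l2_opNorm_mul _ _).trans ?_
          gcongr
          refine (l2_opNorm_mul _ _).trans ?_
          gcongr
          exact l2_opNorm_mul _ _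
      _ ≤ ‖pinv A‖ * ‖pinv A‖ * ‖B - A‖ * 1 := by
          rw [l2_opNorm_transpose, l2_opNorm_transpose]; gcongr
      _ = _ := by ring
  have hsq := l2_opNorm_sq_le_of_isSymm_of_isIdempotentElem (pinv B - pinv A) hsymm hidem
  refine le_of_pow_le_pow_left₀ two_ne_zero (by positivity) ?_
  calc ‖pinv B - pinv A‖ ^ 2
      ≤ (‖B - A‖ * ‖pinv A‖ * ‖pinv B‖) ^ 2 + (‖B - A‖ * ‖pinv A‖ * ‖pinv A‖) ^ 2 := by
        refine hsq.trans (add_le_add ?_ ?_) <;> gcongr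
    _ = (‖B - A‖ * ‖pinv A‖ * √(‖pinv B‖ ^ 2 + ‖pinv A‖ ^ 2)) ^ 2 := by
        rw [mul_pow _ √_, Real.sq_sqrt (by positivity)]; ring

end Perturbation

theorem sqrt_sq_add_sq_le {a b c : ℝ} (ha : 0 ≤ a) (hb : 0 ≤ b) (hac : a ≤ c) (hbc : b ≤ c) :
    √(a ^ 2 + b ^ 2) ≤ √2 * c := by
  rw [← Real.sqrt_sq (ha.trans hac), ← Real.sqrt_mul zero_le_two]
  gcongr
  nlinarith

theorem pinv_perturbation_general (m n : ℕ) (A E : Matrix (Fin m) (Fin n) ℝ)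
    (hE : specNorm E < sigmaMin A) :
    specNorm (pinv (A + E) - pinv A)
      ≤ Real.sqrt 2 * specNorm E / (sigmaMin A * (sigmaMin A - specNorm E)) := by
  simp only [specNorm_eq_l2_opNorm] at hE ⊢
  have hσ : 0 < sigmaMin A := (norm_nonneg E).trans_lt hE
  have hσε : 0 < sigmaMin A - ‖E‖ := sub_pos.2 hE
  have hA := sigmaMin_mul_norm_le A
  have hB := sigmaMin_sub_l2_opNorm_mul_norm_le A E
  have hpA := l2_opNorm_pinv_le_of_bounded_below A hσ hA
  have hpB := l2_opNorm_pinv_le_of_bounded_below (A + E) hσε hB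
  have hdiff := l2_opNorm_pinv_sub_pinv_le
    (isUnit_det_transpose_mul_self_of_bounded_below A hσ hA)
    (isUnit_det_transpose_mul_self_of_bounded_below (A + E) hσε hB)
  have hsqrt : √(‖pinv (A + E)‖ ^ 2 + ‖pinv A‖ ^ 2) ≤ √2 * (sigmaMin A - ‖E‖)⁻¹ :=
    sqrt_sq_add_sq_le (norm_nonneg _) (norm_nonneg _) hpB
      (hpA.trans (inv_anti₀ hσε (sub_le_self _ (norm_nonneg E))))
  calc ‖pinv (A + E) - pinv A‖
      ≤ ‖A + E - A‖ * ‖pinv A‖ * √(‖pinv (A + E)‖ ^ 2 + ‖pinv A‖ ^ 2) := hdiff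
    _ ≤ ‖E‖ * (sigmaMin A)⁻¹ * (√2 * (sigmaMin A - ‖E‖)⁻¹) := by
        rw [add_sub_cancel_left]; gcongr
    _ = √2 * ‖E‖ / (sigmaMin A * (sigmaMin A - ‖E‖)) := by field_simp

/-- Stability of the pseudo-inverse: for `A, E ∈ ℝ^{m×n}` with `m ≥ n`,
`rank(A) = n` and `‖E‖ < σₙ(A)`, one has
`‖(A+E)† − A†‖ ≤ √2 ‖E‖ / (σₙ(A)(σₙ(A) − ‖E‖))`. -/
theorem pinv_perturbation (m n : ℕ) (hmn : n ≤ m) (A E : Matrix (Fin m) (Fin n) ℝ)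
    (hA : A.rank = n) (hE : specNorm E < sigmaMin A) :
    specNorm (pinv (A + E) - pinv A)
      ≤ Real.sqrt 2 * specNorm E / (sigmaMin A * (sigmaMin A - specNorm E)) :=
  pinv_perturbation_general m n A E hE
end

section
/- There exist two sets S₁ = {x² + √6·xy, x² + y², y² + √6·xy} and S₂ = {x², x² + √6·xy + y², y²} of bivariate homogeneous quadratic polynomials such that: (1) in each set the three coefficient matrices are linearly independent, (2) the sets are distinct (indeed no bijection between them matches polynomials up to sign), and (3) ∑_{p∈S₁} p(x,y)³ = ∑_{p∈S₂} p(x,y)³ as polynomials in x, y. -/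
open MvPolynomial

/-!
In the monomial basis `x², xy, y²` the two triples have coefficient matrices with determinants
`-2a` and `a`, whose rows differ pairwise even up to sign. Expanding the cubes, the two sums
agree coefficientwise except at `x³y³`, where they read `2a³` and `6a + a³`; these are equal
because `a = √6` satisfies `a³ = 6a`.
-/

theorem linearIndependent_X_sq_X_mul_X_X_sq {σ R : Type*} [CommSemiring R] {i j : σ}
    (hij : i ≠ j) : LinearIndependent R ![(X i ^ 2 : MvPolynomial σ R), X i * X j, X j ^ 2] := by
  let e : Fin 3 → σ →₀ ℕ := ![.single i 2, .single i 1 + .single j 1, .single j 2]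
  have he : Function.Injective e := by
    refine Function.Injective.of_comp (f := fun s => s i) ?_
    intro k l hkl
    fin_cases k <;> fin_cases l <;> simp_all [e]
  convert (basisMonomials σ R).linearIndependent.comp e he using 1
  ext k : 1
  fin_cases k
  · exact X_pow_eq_monomial
  · simp [e, X, monomial_mul]
  · exact X_pow_eq_monomial

theorem LinearIndependent.linearCombination_rows_of_det_ne_zero {R M ι : Type*} [CommRing R]
    [IsDomain R] [AddCommGroup M] [Module R M] [Fintype ι] [DecidableEq ι] {b : ι → M}
    (hb : LinearIndependent R b) {A : Matrix ι ι R} (hA : A.det ≠ 0) :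
    LinearIndependent R fun i => Fintype.linearCombination R b (A i) :=
  (LinearMap.linearIndependent_iff _
    (LinearMap.ker_eq_bot.2 hb.fintypeLinearCombination_injective)).2
      (Matrix.linearIndependent_rows_of_det_ne_zero hA)

theorem sum_cubes_eq_of_pow_three_eq {R : Type*} [CommRing R] {a : R} (ha : a ^ 3 = 6 * a)
    (x y : R) :
    (x ^ 2 + a * x * y) ^ 3 + (x ^ 2 + y ^ 2) ^ 3 + (y ^ 2 + a * x * y) ^ 3 =
      (x ^ 2) ^ 3 + (x ^ 2 + a * x * y + y ^ 2) ^ 3 + (y ^ 2) ^ 3 := by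
  linear_combination (x ^ 3 * y ^ 3) * ha

/-- Non-identifiability of sums of cubes of quadratics: the two triples
`S₁ = (x² + √6·xy, x² + y², y² + √6·xy)` and `S₂ = (x², x² + √6·xy + y², y²)`
of bivariate quadratics are each linearly independent, no member of one equals
a member of the other even up to sign, yet the sums of their cubes coincide. -/
theorem cubics_of_quadratics_nonidentifiable :
    let a : ℝ := Real.sqrt 6
    let x : MvPolynomial (Fin 2) ℝ := X 0
    let y : MvPolynomial (Fin 2) ℝ := X 1
    let p : Fin 3 → MvPolynomial (Fin 2) ℝ :=
      ![x ^ 2 + C a * x * y, x ^ 2 + y ^ 2, y ^ 2 + C a * x * y]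
    let q : Fin 3 → MvPolynomial (Fin 2) ℝ :=
      ![x ^ 2, x ^ 2 + C a * x * y + y ^ 2, y ^ 2]
    LinearIndependent ℝ p ∧ LinearIndependent ℝ q ∧
    (∀ i j : Fin 3, p i ≠ q j ∧ p i ≠ -q j) ∧
    (∑ i : Fin 3, p i ^ 3) = ∑ i : Fin 3, q i ^ 3 := by
  intro a x y p q
  have ha : a ≠ 0 := by positivity
  have ha3 : a ^ 3 = 6 * a := by rw [pow_succ, Real.sq_sqrt (by norm_num)]
  have hb := linearIndependent_X_sq_X_mul_X_X_sq (R := ℝ) (show (0 : Fin 2) ≠ 1 by decide)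
  let φ := Fintype.linearCombination ℝ ![x ^ 2, x * y, y ^ 2]
  have hφ : Function.Injective φ := hb.fintypeLinearCombination_injective
  let P : Matrix (Fin 3) (Fin 3) ℝ := !![1, a, 0; 1, 0, 1; 0, a, 1]
  let Q : Matrix (Fin 3) (Fin 3) ℝ := !![1, 0, 0; 1, a, 1; 0, 0, 1]
  have hp : p = fun i => φ (P i) := by
    ext1 i
    fin_cases i <;> simp [p, φ, P, Fintype.linearCombination_apply, Fin.sum_univ_three, C_mul']
    exact add_comm _ _
  have hq : q = fun i => φ (Q i) := by
    ext1 i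
    fin_cases i <;> simp [q, φ, Q, Fintype.linearCombination_apply, Fin.sum_univ_three, C_mul']
  have hP : P.det = -2 * a := by simp [P, Matrix.det_fin_three]; ring
  have hQ : Q.det = a := by simp [Q, Matrix.det_fin_three]
  refine ⟨?_, ?_, ?_, ?_⟩
  · exact hp ▸ hb.linearCombination_rows_of_det_ne_zero (by simp [hP, ha])
  · exact hq ▸ hb.linearCombination_rows_of_det_ne_zero (by simp [hQ, ha])
  · intro i j
    simp only [hp, hq, ← map_neg, hφ.ne_iff]
    fin_cases i <;> fin_cases j <;>
      simp [P, Q, _root_.funext_iff, Fin.forall_fin_succ, ha, ha.symm]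
  · simpa [p, q, Fin.sum_univ_three] using
      sum_cubes_eq_of_pow_three_eq (by rw [← C_pow, ha3, C_mul, map_ofNat C 6]) x y
end

section
/- Let A₁, A₂ be symmetric n × n real matrices whose vectorized upper-triangular parts V₁, V₂ ∈ ℝ^{n(n+1)/2} are linearly independent and not orthogonal with distinct norms (a generic condition). Then there exist symmetric matrices A₁', A₂' with {A₁', A₂'} ≠ {±A₁, ±A₂} such that (xᵀA₁x)² + (xᵀA₂x)² = (xᵀA₁'x)² + (xᵀA₂'x)² for all x ∈ ℝⁿ. -/
open Matrix

/-- The inner product of the vectorized upper-triangular parts of two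
`n × n` matrices. -/
def upperTriInner {n : ℕ} (A B : Matrix (Fin n) (Fin n) ℝ) : ℝ :=
  ∑ i : Fin n, ∑ j : Fin n, if i ≤ j then A i j * B i j else 0

/-!
Since `(p, q) ↦ p² + q²` is invariant under rotations of the plane, rotating the pair of
quadratic forms `(xᵀA₁x, xᵀA₂x)` by any angle `θ` — that is, replacing `(A₁, A₂)` by
`(cos θ • A₁ + sin θ • A₂, -sin θ • A₁ + cos θ • A₂)` — leaves the sum of squares unchanged.
For `θ = π/4` both coefficients are nonzero, so by linear independence the new matrices are
not `±A₁, ±A₂`.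
-/

section LinearIndependence

variable {R M : Type*} [Ring R] [AddCommGroup M] [Module R M] {u v : M}

theorem LinearIndependent.pair_smul_add_smul_ne_smul_left (h : LinearIndependent R ![u, v])
    {a b : R} (hb : b ≠ 0) (t : R) : a • u + b • v ≠ t • u := by
  intro heq
  have hzero : (a - t) • u + b • v = 0 := by rw [sub_smul, ← heq]; abel
  exact hb (LinearIndependent.pair_iff.mp h _ _ hzero).2

theorem LinearIndependent.pair_smul_add_smul_ne_smul_right (h : LinearIndependent R ![u, v])
    {a b : R} (ha : a ≠ 0) (t : R) : a • u + b • v ≠ t • v := by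
  intro heq
  have hzero : a • u + (b - t) • v = 0 := by rw [sub_smul, ← heq]; abel
  exact ha (LinearIndependent.pair_iff.mp h _ _ hzero).1

end LinearIndependence

theorem Matrix.dotProduct_smul_add_smul_mulVec {R n : Type*} [CommRing R] [Fintype n]
    (x : n → R) (A B : Matrix n n R) (a b : R) :
    x ⬝ᵥ (a • A + b • B) *ᵥ x = a * (x ⬝ᵥ A *ᵥ x) + b * (x ⬝ᵥ B *ᵥ x) := by
  simp only [add_mulVec, smul_mulVec, dotProduct_add, dotProduct_smul, smul_eq_mul]

theorem rotation_sq_add_sq {R : Type*} [CommRing R] {c s : R} (hcs : c ^ 2 + s ^ 2 = 1)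
    (p q : R) : (c * p + s * q) ^ 2 + (-s * p + c * q) ^ 2 = p ^ 2 + q ^ 2 := by
  linear_combination (p ^ 2 + q ^ 2) * hcs

theorem sq_quadForm_add_sq_quadForm_rotate {n : Type*} [Fintype n] (A₁ A₂ : Matrix n n ℝ)
    (θ : ℝ) (x : n → ℝ) :
    (x ⬝ᵥ A₁ *ᵥ x) ^ 2 + (x ⬝ᵥ A₂ *ᵥ x) ^ 2 =
      (x ⬝ᵥ (Real.cos θ • A₁ + Real.sin θ • A₂) *ᵥ x) ^ 2 +
        (x ⬝ᵥ (-Real.sin θ • A₁ + Real.cos θ • A₂) *ᵥ x) ^ 2 := by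
  rw [dotProduct_smul_add_smul_mulVec, dotProduct_smul_add_smul_mulVec,
    rotation_sq_add_sq (Real.cos_sq_add_sin_sq θ)]

theorem sum_of_squares_of_quadratics_nonidentifiable_general (n : ℕ)
    (A₁ A₂ : Matrix (Fin n) (Fin n) ℝ) (h₁ : A₁.IsSymm) (h₂ : A₂.IsSymm)
    (hli : LinearIndependent ℝ ![A₁, A₂]) :
    ∃ B₁ B₂ : Matrix (Fin n) (Fin n) ℝ, B₁.IsSymm ∧ B₂.IsSymm ∧
      ¬(((B₁ = A₁ ∨ B₁ = -A₁) ∧ (B₂ = A₂ ∨ B₂ = -A₂)) ∨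
        ((B₁ = A₂ ∨ B₁ = -A₂) ∧ (B₂ = A₁ ∨ B₂ = -A₁))) ∧
      ∀ x : Fin n → ℝ,
        (x ⬝ᵥ A₁ *ᵥ x) ^ 2 + (x ⬝ᵥ A₂ *ᵥ x) ^ 2
          = (x ⬝ᵥ B₁ *ᵥ x) ^ 2 + (x ⬝ᵥ B₂ *ᵥ x) ^ 2 := by
  set θ := Real.pi / 4
  have hcos : Real.cos θ ≠ 0 := by simp [θ, Real.cos_pi_div_four]
  have hsin : Real.sin θ ≠ 0 := by simp [θ, Real.sin_pi_div_four]
  refine ⟨Real.cos θ • A₁ + Real.sin θ • A₂, -Real.sin θ • A₁ + Real.cos θ • A₂,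
    (h₁.smul _).add (h₂.smul _), (h₁.smul _).add (h₂.smul _), ?_,
    sq_quadForm_add_sq_quadForm_rotate A₁ A₂ θ⟩
  have hne₁ (t : ℝ) := hli.pair_smul_add_smul_ne_smul_left (a := Real.cos θ) hsin t
  have hne₂ (t : ℝ) := hli.pair_smul_add_smul_ne_smul_right (b := Real.sin θ) hcos t
  rintro (⟨h | h, -⟩ | ⟨h | h, -⟩)
  · exact hne₁ 1 (by rw [h, one_smul])
  · exact hne₁ (-1) (by rw [h, neg_one_smul])
  · exact hne₂ 1 (by rw [h, one_smul])
  · exact hne₂ (-1) (by rw [h, neg_one_smul])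

/-- Non-identifiability of sums of squares of quadratics: if `A₁, A₂` are
symmetric matrices whose vectorized upper-triangular parts are linearly
independent, not orthogonal, and of distinct norms, then there exist symmetric
`A₁', A₂'`, not equal to `±A₁, ±A₂` in any order, with
`(xᵀA₁x)² + (xᵀA₂x)² = (xᵀA₁'x)² + (xᵀA₂'x)²` for all `x`. -/
theorem sum_of_squares_of_quadratics_nonidentifiable (n : ℕ)
    (A₁ A₂ : Matrix (Fin n) (Fin n) ℝ) (h₁ : A₁.IsSymm) (h₂ : A₂.IsSymm)
    (hli : LinearIndependent ℝ ![A₁, A₂])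
    (hortho : upperTriInner A₁ A₂ ≠ 0)
    (hnorm : upperTriInner A₁ A₁ ≠ upperTriInner A₂ A₂) :
    ∃ B₁ B₂ : Matrix (Fin n) (Fin n) ℝ, B₁.IsSymm ∧ B₂.IsSymm ∧
      ¬(((B₁ = A₁ ∨ B₁ = -A₁) ∧ (B₂ = A₂ ∨ B₂ = -A₂)) ∨
        ((B₁ = A₂ ∨ B₁ = -A₂) ∧ (B₂ = A₁ ∨ B₂ = -A₁))) ∧
      ∀ x : Fin n → ℝ,
        (x ⬝ᵥ A₁ *ᵥ x) ^ 2 + (x ⬝ᵥ A₂ *ᵥ x) ^ 2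
          = (x ⬝ᵥ B₁ *ᵥ x) ^ 2 + (x ⬝ᵥ B₂ *ᵥ x) ^ 2 :=
  sum_of_squares_of_quadratics_nonidentifiable_general n A₁ A₂ h₁ h₂ hli
end

section
/- Let P be an unknown symmetric n × n real matrix and let D be an odd positive integer. Suppose a symmetric order-2D tensor P̃ satisfies ‖P̃ − Sym(P^{⊗D})‖_F ≤ δ, where Sym(P^{⊗D}) is the symmetrization of the D-fold tensor power of P (the coefficient tensor of the polynomial (xᵀPx)^D). Suppose Q is a symmetric n × n matrix such that for every unit vector z ∈ ℝⁿ, ((zᵀQz)^D − (zᵀPz)^D)² ≤ 4δ². Then ‖Q − P‖_F ≤ 2√n · δ^{1/D}. -/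
open Matrix

/-- The symmetrization `Sym(P^{⊗D})` of the `D`-fold tensor power of a matrix
`P`, i.e. the coefficient tensor of the polynomial `(xᵀPx)^D`:
`Sym(P^{⊗D})[i₁,…,i_{2D}] = E_{π ∈ S_{2D}} ∏_{k<D} P[i_{π(2k)}, i_{π(2k+1)}]`. -/
noncomputable def symTensorPow (n D : ℕ) (P : Matrix (Fin n) (Fin n) ℝ) :
    (Fin (2 * D) → Fin n) → ℝ := fun idx =>
  (∑ π : Equiv.Perm (Fin (2 * D)), ∏ k : Fin D,
      P (idx (π ⟨2 * (k : ℕ), by have := k.isLt; omega⟩))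
        (idx (π ⟨2 * (k : ℕ) + 1, by have := k.isLt; omega⟩)))
    / (Nat.factorial (2 * D) : ℝ)

/-- For `0 ≤ b ≤ a` and `D ≥ 1`, `(a-b)^D ≤ 2^(D-1) (a^D - b^D)`. -/
lemma aux_nonneg (D : ℕ) (hD : D ≠ 0) {a b : ℝ} (hb : 0 ≤ b) (h : b ≤ a) :
    (a - b) ^ D ≤ 2 ^ (D - 1) * (a ^ D - b ^ D) := by
  have ha : 0 ≤ a := hb.trans h
  have h1 : b ^ D ≤ b * a ^ (D - 1) := by
    calc b ^ D = b * b ^ (D - 1) := by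
          rw [← pow_succ']; congr 1; omega
      _ ≤ b * a ^ (D - 1) :=
          mul_le_mul_of_nonneg_left (pow_le_pow_left₀ hb h _) hb
  have h2 : (a - b) * a ^ (D - 1) ≤ a ^ D - b ^ D := by
    have ha' : a * a ^ (D - 1) = a ^ D := by rw [← pow_succ']; congr 1; omega
    nlinarith
  have h3 : (a - b) ^ D ≤ (a - b) * a ^ (D - 1) := by
    calc (a - b) ^ D = (a - b) * (a - b) ^ (D - 1) := by
          rw [← pow_succ']; congr 1; omega
      _ ≤ (a - b) * a ^ (D - 1) :=
          mul_le_mul_of_nonneg_left (pow_le_pow_left₀ (by linarith) (by linarith) _) (by linarith)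
  have h4 : (0:ℝ) ≤ a ^ D - b ^ D :=
    le_trans (mul_nonneg (by linarith) (pow_nonneg ha _)) h2
  have h5 : (1:ℝ) ≤ 2 ^ (D - 1) := one_le_pow₀ (by norm_num)
  nlinarith

/-- For odd `D` and `b ≤ a`, `(a-b)^D ≤ 2^(D-1) (a^D - b^D)`. -/
lemma aux_odd (D : ℕ) (hD : Odd D) {a b : ℝ} (h : b ≤ a) :
    (a - b) ^ D ≤ 2 ^ (D - 1) * (a ^ D - b ^ D) := by
  have hD0 : D ≠ 0 := by rintro rfl; simp at hD
  rcases le_or_gt 0 b with hb | hb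
  · exact aux_nonneg D hD0 hb h
  rcases le_or_gt a 0 with ha | ha
  · have key := aux_nonneg D hD0 (b := -a) (a := -b) (by linarith) (by linarith)
    have e1 : (-b) ^ D = -(b ^ D) := hD.neg_pow b
    have e2 : (-a) ^ D = -(a ^ D) := hD.neg_pow a
    have e3 : (-b - -a) = a - b := by ring
    rw [e1, e2, e3] at key
    linarith
  · have key := add_pow_le ha.le (by linarith : (0:ℝ) ≤ -b) D
    have e1 : (-b) ^ D = -(b ^ D) := hD.neg_pow b
    rw [e1] at key
    have e3 : (a + -b) = a - b := by ring
    rw [e3] at key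
    linarith

/-- Taking stable `D`-th roots for odd `D`. -/
lemma root_bound (D : ℕ) (hD : Odd D) {a b δ : ℝ} (hδ : 0 ≤ δ) (hab : b ≤ a)
    (h : a ^ D - b ^ D ≤ 2 * δ) : a - b ≤ 2 * δ ^ ((1 : ℝ) / (D : ℝ)) := by
  have hD0 : D ≠ 0 := by rintro rfl; simp at hD
  have hDc : (D : ℝ) ≠ 0 := Nat.cast_ne_zero.mpr hD0
  have hc : 0 ≤ a - b := by linarith
  have h1 := aux_odd D hD hab
  have h3 : ((a - b) / 2) ^ D ≤ δ := by
    rw [div_pow, div_le_iff₀ (by positivity)]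
    have h2' : (2:ℝ) ^ (D - 1) * (a ^ D - b ^ D) ≤ 2 ^ (D - 1) * (2 * δ) :=
      mul_le_mul_of_nonneg_left h (by positivity)
    have e : (2:ℝ) ^ D = 2 ^ (D - 1) * 2 := by rw [← pow_succ]; congr 1; omega
    rw [e]
    nlinarith
  have hc2 : (0:ℝ) ≤ (a - b) / 2 := by linarith
  have h4 := Real.rpow_le_rpow (pow_nonneg hc2 D) h3
    (by positivity : (0:ℝ) ≤ 1 / (D : ℝ))
  rw [← Real.rpow_natCast ((a - b) / 2) D, ← Real.rpow_mul hc2, mul_one_div,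
    div_self hDc, Real.rpow_one] at h4
  linarith

/-- The bilinear form of a matrix, as an explicit double sum. -/
def bform (n : ℕ) (M : Matrix (Fin n) (Fin n) ℝ) (z w : Fin n → ℝ) : ℝ :=
  ∑ i, ∑ j, z i * M i j * w j

lemma bform_dot (n : ℕ) (M : Matrix (Fin n) (Fin n) ℝ) (z w : Fin n → ℝ) :
    z ⬝ᵥ M *ᵥ w = bform n M z w := by
  simp [bform, Matrix.mulVec, dotProduct, Finset.mul_sum, mul_assoc]

lemma bform_symm (n : ℕ) (M : Matrix (Fin n) (Fin n) ℝ)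
    (hM : ∀ i j, M i j = M j i) (z w : Fin n → ℝ) :
    bform n M z w = bform n M w z := by
  rw [bform, Finset.sum_comm]
  refine Finset.sum_congr rfl fun j _ => Finset.sum_congr rfl fun i _ => ?_
  rw [hM i j]; ring

lemma bform_polar (n : ℕ) (M : Matrix (Fin n) (Fin n) ℝ) (z w : Fin n → ℝ) :
    bform n M (z + w) (z + w) - bform n M (z - w) (z - w)
      = 2 * bform n M z w + 2 * bform n M w z := by
  simp only [bform, Finset.mul_sum, ← Finset.sum_sub_distrib, ← Finset.sum_add_distrib]
  refine Finset.sum_congr rfl fun i _ => Finset.sum_congr rfl fun j _ => ?_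
  simp only [Pi.add_apply, Pi.sub_apply]; ring

lemma sumsq_polar (n : ℕ) (z w : Fin n → ℝ) :
    (∑ i, ((z + w) i) ^ 2) + (∑ i, ((z - w) i) ^ 2)
      = 2 * (∑ i, z i ^ 2) + 2 * (∑ i, w i ^ 2) := by
  simp only [Finset.mul_sum, ← Finset.sum_add_distrib]
  refine Finset.sum_congr rfl fun i _ => ?_
  simp only [Pi.add_apply, Pi.sub_apply]; ring

/-- Stable `D`-th roots, odd case: if a symmetric order-`2D` tensor `P̃` is
`δ`-close in Frobenius norm to `Sym(P^{⊗D})`, and `Q` is a symmetric matrix with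
`((zᵀQz)^D − (zᵀPz)^D)² ≤ 4δ²` for all unit `z`, then
`‖Q − P‖_F ≤ 2√n · δ^{1/D}`. -/
theorem odd_root_stability (n D : ℕ) (hD : Odd D) (δ : ℝ)
    (P Q : Matrix (Fin n) (Fin n) ℝ) (hP : P.IsSymm) (hQ : Q.IsSymm)
    (Pt : (Fin (2 * D) → Fin n) → ℝ)
    (hPt : ∀ (idx : Fin (2 * D) → Fin n) (π : Equiv.Perm (Fin (2 * D))),
      Pt (idx ∘ π) = Pt idx)
    (hclose : Real.sqrt (∑ idx : Fin (2 * D) → Fin n,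
        (Pt idx - symTensorPow n D P idx) ^ 2) ≤ δ)
    (hQP : ∀ z : Fin n → ℝ, (∑ i, z i ^ 2) = 1 →
      ((z ⬝ᵥ Q *ᵥ z) ^ D - (z ⬝ᵥ P *ᵥ z) ^ D) ^ 2 ≤ 4 * δ ^ 2) :
    Real.sqrt (∑ i, ∑ j, (Q i j - P i j) ^ 2)
      ≤ 2 * Real.sqrt n * δ ^ ((1 : ℝ) / (D : ℝ)) := by
  have hδ : 0 ≤ δ := le_trans (Real.sqrt_nonneg _) hclose
  set ε : ℝ := 2 * δ ^ ((1 : ℝ) / (D : ℝ)) with hεdef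
  have hε0 : 0 ≤ ε := by
    have := Real.rpow_nonneg hδ ((1 : ℝ) / (D : ℝ)); positivity
  set M : Matrix (Fin n) (Fin n) ℝ := Q - P with hMdef
  have hMa : ∀ i j, M i j = Q i j - P i j := fun i j => rfl
  have hM : ∀ i j, M i j = M j i := by
    intro i j
    rw [hMa, hMa, hP.apply i j, hQ.apply i j]
  -- Step 1 : unit vectors
  have step1 : ∀ z : Fin n → ℝ, (∑ i, z i ^ 2) = 1 → |bform n M z z| ≤ ε := by
    intro z hz
    have hbz : bform n M z z = (z ⬝ᵥ Q *ᵥ z) - (z ⬝ᵥ P *ᵥ z) := by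
      rw [← bform_dot, hMdef, Matrix.sub_mulVec, dotProduct_sub]
    set a := z ⬝ᵥ Q *ᵥ z with ha
    set b := z ⬝ᵥ P *ᵥ z with hb
    have hsq := hQP z hz
    have habs : |a ^ D - b ^ D| ≤ 2 * δ := by
      have h1 : |a ^ D - b ^ D| = Real.sqrt ((a ^ D - b ^ D) ^ 2) :=
        (Real.sqrt_sq_eq_abs _).symm
      rw [h1]
      calc Real.sqrt ((a ^ D - b ^ D) ^ 2) ≤ Real.sqrt ((2 * δ) ^ 2) := by
            apply Real.sqrt_le_sqrt; nlinarith
        _ = 2 * δ := Real.sqrt_sq (by linarith)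
    rw [abs_le] at habs
    rw [hbz]
    rcases le_total b a with hab | hab
    · rw [abs_of_nonneg (by linarith : (0:ℝ) ≤ a - b)]
      exact root_bound D hD hδ hab habs.2
    · rw [abs_of_nonpos (by linarith : a - b ≤ 0), neg_sub]
      exact root_bound D hD hδ hab (by linarith)
  -- Step 2 : homogeneous quadratic bound
  have step2 : ∀ z : Fin n → ℝ, |bform n M z z| ≤ ε * ∑ i, z i ^ 2 := by
    intro z
    rcases eq_or_lt_of_le (Finset.sum_nonneg fun i _ => sq_nonneg (z i)) with hz | hz
    · have hzz : ∀ i, z i = 0 := by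
        intro i
        have := (Finset.sum_eq_zero_iff_of_nonneg
          (fun i (_ : i ∈ Finset.univ) => sq_nonneg (z i))).mp hz.symm i (Finset.mem_univ i)
        exact pow_eq_zero_iff (two_ne_zero) |>.mp this
      have hb0 : bform n M z z = 0 :=
        Finset.sum_eq_zero fun i _ => Finset.sum_eq_zero fun j _ => by rw [hzz i]; ring
      rw [hb0, abs_zero, ← hz, mul_zero]
    · set s := Real.sqrt (∑ i, z i ^ 2) with hsdef
      have hs0 : 0 < s := Real.sqrt_pos.mpr hz
      have hss : s ^ 2 = ∑ i, z i ^ 2 := Real.sq_sqrt hz.le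
      set u : Fin n → ℝ := fun i => s⁻¹ * z i with hu
      have hu1 : (∑ i, u i ^ 2) = 1 := by
        simp only [hu, mul_pow]
        rw [← Finset.mul_sum, ← hss]
        field_simp
      have h1 := step1 u hu1
      have h2 : bform n M u u = s⁻¹ * s⁻¹ * bform n M z z := by
        simp only [bform, hu, Finset.mul_sum]
        exact Finset.sum_congr rfl fun i _ => Finset.sum_congr rfl fun j _ => by ring
      have h3 : |bform n M z z| = s * s * |bform n M u u| := by
        rw [h2, abs_mul, abs_mul, abs_of_pos (inv_pos.mpr hs0)]
        field_simp
      rw [h3, ← hss]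
      nlinarith [mul_pos hs0 hs0]
  -- Step 3 : bilinear bound
  have step3 : ∀ z w : Fin n → ℝ,
      bform n M z w ≤ ε / 2 * ((∑ i, z i ^ 2) + (∑ i, w i ^ 2)) := by
    intro z w
    have h1 := step2 (z + w)
    have h2 := step2 (z - w)
    have hp := bform_polar n M z w
    have hq := sumsq_polar n z w
    have hsym := bform_symm n M hM z w
    have h1' : bform n M (z + w) (z + w) ≤ ε * ∑ i, ((z + w) i) ^ 2 :=
      le_trans (le_abs_self _) h1
    have h2' : -(ε * ∑ i, ((z - w) i) ^ 2) ≤ bform n M (z - w) (z - w) :=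
      neg_le_of_abs_le h2
    nlinarith
  -- Row bound
  have row : ∀ i, (∑ j, M i j ^ 2) ≤ ε ^ 2 := by
    intro i
    set S := ∑ j, M i j ^ 2 with hS
    have hS0 : 0 ≤ S := Finset.sum_nonneg fun j _ => sq_nonneg _
    rcases eq_or_lt_of_le hS0 with h0 | h0
    · rw [← h0]; positivity
    · set s := Real.sqrt S with hsdef
      have hs0 : 0 < s := Real.sqrt_pos.mpr h0
      have hss : s ^ 2 = S := Real.sq_sqrt hS0
      set w : Fin n → ℝ := fun j => s⁻¹ * M i j with hw
      set z : Fin n → ℝ := fun k => if k = i then 1 else 0 with hz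
      have hz2 : (∑ k, z k ^ 2) = 1 := by
        have : ∀ k, z k ^ 2 = if k = i then (1:ℝ) else 0 := by
          intro k; simp only [hz]; split <;> norm_num
        rw [Finset.sum_congr rfl fun k _ => this k, Finset.sum_ite_eq' Finset.univ i fun _ => (1:ℝ)]
        simp
      have hw2 : (∑ k, w k ^ 2) = 1 := by
        simp only [hw, mul_pow]
        rw [← Finset.mul_sum, ← hS, ← hss]
        field_simp
      have hbzw : bform n M z w = s := by
        calc bform n M z w
            = ∑ i', (if i' = i then (1:ℝ) else 0) * (∑ j, M i' j * w j) := by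
              refine Finset.sum_congr rfl fun i' _ => ?_
              rw [Finset.mul_sum]
              exact Finset.sum_congr rfl fun j _ => by simp only [hz]; ring
          _ = ∑ j, M i j * w j := by
              simp only [ite_mul, one_mul, zero_mul]
              rw [Finset.sum_ite_eq' Finset.univ i fun i' => ∑ j, M i' j * w j]
              simp
          _ = s⁻¹ * ∑ j, M i j ^ 2 := by
              rw [Finset.mul_sum]
              exact Finset.sum_congr rfl fun j _ => by simp only [hw]; ring
          _ = s := by
              rw [← hS, ← hss, sq]
              field_simp
      have h3 := step3 z w
      rw [hbzw, hz2, hw2] at h3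
      have hsε : s ≤ ε := by linarith
      rw [← hss]
      exact pow_le_pow_left₀ hs0.le hsε 2
  -- Conclusion
  have total : (∑ i, ∑ j, (Q i j - P i j) ^ 2) ≤ (n : ℝ) * ε ^ 2 := by
    have e : (∑ i, ∑ j, (Q i j - P i j) ^ 2) = ∑ i, ∑ j, M i j ^ 2 := by
      refine Finset.sum_congr rfl fun i _ => Finset.sum_congr rfl fun j _ => by rw [hMa]
    rw [e]
    calc ∑ i, ∑ j, M i j ^ 2 ≤ ∑ _i : Fin n, ε ^ 2 :=
          Finset.sum_le_sum fun i _ => row i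
      _ = (n : ℝ) * ε ^ 2 := by
          rw [Finset.sum_const, Finset.card_univ, Fintype.card_fin, nsmul_eq_mul]
  calc Real.sqrt (∑ i, ∑ j, (Q i j - P i j) ^ 2)
      ≤ Real.sqrt ((n : ℝ) * ε ^ 2) := Real.sqrt_le_sqrt total
    _ = Real.sqrt n * ε := by
        rw [Real.sqrt_mul (Nat.cast_nonneg n), Real.sqrt_sq hε0]
    _ = 2 * Real.sqrt n * δ ^ ((1 : ℝ) / (D : ℝ)) := by rw [hεdef]; ring
end

section
/- Let W and W̃ be d-dimensional subspaces of ℝⁿ with ‖proj(W) − proj(W̃)‖_F ≤ 1. Then there exist matrices W, W̃ ∈ ℝ^{n×d} with orthonormal columns spanning W and W̃ respectively such that W̃ = W + Γ with ‖Γ‖_F ≤ O(d · ‖proj(W̃) − proj(W)‖_F). -/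
/-!
Take an orthonormal basis `B` of `W` and project it onto `W̃`: with `E = proj(W̃) − proj(W)`,
`V = proj(W̃) B = B + E B`. When `‖E‖_F ≤ 1/4`, `‖V x‖ ≥ (3/4)‖x‖`, so the eigenvalues of `Vᵀ V`
are at least `9/16` and the polar factor `V (Vᵀ V)^{-1/2}` is an orthonormal basis of `W̃`.
Eigenvalue by eigenvalue, `|μ^{-1/2} − 1| ≤ |μ − 1|`, so `(Vᵀ V)^{-1/2} − 1` is no larger than
`Vᵀ V − 1 = O(d ‖E‖_F)`, which gives `‖V (Vᵀ V)^{-1/2} − B‖_F ≤ 4 d ‖E‖_F`. When `‖E‖_F > 1/4`,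
any two orthonormal bases are within `2√d ≤ 8 d ‖E‖_F` of each other.
-/

open Matrix

/-- The matrix (in the standard basis) of the orthogonal projection onto a
subspace `U ≤ ℝⁿ`. -/
noncomputable def projMat (n : ℕ) (U : Submodule ℝ (EuclideanSpace ℝ (Fin n))) :
    Matrix (Fin n) (Fin n) ℝ := fun i j =>
  (U.subtypeL.comp U.orthogonalProjectionOnto) (EuclideanSpace.single j 1) i

/-- The Frobenius norm of a real matrix. -/
noncomputable def frobNorm {a b : ℕ} (M : Matrix (Fin a) (Fin b) ℝ) : ℝ :=
  Real.sqrt (∑ i, ∑ j, M i j ^ 2)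

open WithLp
open scoped Matrix.Norms.Frobenius

lemma frobNorm_eq_norm {a b : ℕ} (M : Matrix (Fin a) (Fin b) ℝ) : frobNorm M = ‖M‖ := by
  simp [frobNorm, frobenius_norm_def, Real.sqrt_eq_rpow]

namespace Matrix

variable {m n p : Type*}

lemma frobenius_norm_sq_eq_trace [Fintype m] [Fintype n] (M : Matrix m n ℝ) :
    ‖M‖ ^ 2 = (Mᵀ * M).trace := by
  rw [frobenius_norm_def, ← Real.rpow_natCast, ← Real.rpow_mul (by positivity)]
  simp [trace, mul_apply, Finset.sum_comm (γ := m), sq]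

lemma frobenius_norm_mul_of_transpose_mul_self [Fintype m] [Fintype n] [Fintype p]
    [DecidableEq n] {B : Matrix m n ℝ} (hB : Bᵀ * B = 1) (C : Matrix n p ℝ) : ‖B * C‖ = ‖C‖ := by
  rw [← sq_eq_sq₀ (norm_nonneg _) (norm_nonneg _), frobenius_norm_sq_eq_trace,
    frobenius_norm_sq_eq_trace, transpose_mul, Matrix.mul_assoc, ← Matrix.mul_assoc Bᵀ, hB,
    Matrix.one_mul]

lemma frobenius_norm_one [Fintype n] [DecidableEq n] :
    ‖(1 : Matrix n n ℝ)‖ = √(Fintype.card n) := by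
  simpa using congrArg NNReal.toReal (frobenius_nnnorm_one (n := n) (α := ℝ))

lemma frobenius_norm_of_transpose_mul_self [Fintype m] [Fintype n] [DecidableEq n]
    {B : Matrix m n ℝ} (hB : Bᵀ * B = 1) : ‖B‖ = √(Fintype.card n) := by
  rw [← Matrix.mul_one B, frobenius_norm_mul_of_transpose_mul_self hB, frobenius_norm_one]

lemma frobenius_norm_sub_le_of_transpose_mul_self [Fintype m] [Fintype n] [DecidableEq n]
    {B B' : Matrix m n ℝ} (hB : Bᵀ * B = 1) (hB' : B'ᵀ * B' = 1) :
    ‖B' - B‖ ≤ 2 * Fintype.card n := by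
  have hsqrt : √(Fintype.card n : ℝ) ≤ Fintype.card n := Real.sqrt_le_self_iff.mpr <| by
    rcases Fintype.card n with _ | k <;> simp
  grw [norm_sub_le, frobenius_norm_of_transpose_mul_self hB,
    frobenius_norm_of_transpose_mul_self hB']
  linarith

lemma norm_mulVec_le_frobenius [Fintype m] [Fintype n] (M : Matrix m n ℝ) (x : n → ℝ) :
    ‖toLp 2 (M *ᵥ x)‖ ≤ ‖M‖ * ‖toLp 2 x‖ := by
  simpa only [← frobenius_norm_replicateCol (ι := Unit), replicateCol_mulVec]
    using frobenius_norm_mul M (replicateCol Unit x)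

lemma norm_mulVec_of_transpose_mul_self [Fintype m] [Fintype n] [DecidableEq n]
    {B : Matrix m n ℝ} (hB : Bᵀ * B = 1) (x : n → ℝ) : ‖toLp 2 (B *ᵥ x)‖ = ‖toLp 2 x‖ := by
  simpa only [← frobenius_norm_replicateCol (ι := Unit), replicateCol_mulVec]
    using frobenius_norm_mul_of_transpose_mul_self hB (replicateCol Unit x)

lemma orthonormal_cols_iff [Fintype m] [DecidableEq n] {B : Matrix m n ℝ} :
    Orthonormal ℝ (fun j => toLp 2 (Bᵀ j)) ↔ Bᵀ * B = 1 := by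
  simp only [orthonormal_iff_ite, EuclideanSpace.inner_toLp_toLp, ← Matrix.ext_iff, mul_apply',
    one_apply, star_trivial, dotProduct_comm]
  rfl

lemma span_cols_eq_of_orthonormal [Fintype m] [Fintype n] [DecidableEq n] {B : Matrix m n ℝ}
    (hB : Bᵀ * B = 1) {U : Submodule ℝ (EuclideanSpace ℝ m)}
    (hU : Module.finrank ℝ U = Fintype.card n) (hcols : ∀ j, toLp 2 (Bᵀ j) ∈ U) :
    Submodule.span ℝ (Set.range fun j => toLp 2 (Bᵀ j)) = U := by
  refine Submodule.eq_of_le_of_finrank_eq (Submodule.span_le.mpr ?_) ?_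
  · rintro _ ⟨j, rfl⟩
    exact hcols j
  · rw [finrank_span_eq_card (orthonormal_cols_iff.mpr hB).linearIndependent, hU]

lemma exists_orthonormal_cols_span_eq [Fintype m] [Fintype n] [DecidableEq n]
    (U : Submodule ℝ (EuclideanSpace ℝ m)) (hU : Module.finrank ℝ U = Fintype.card n) :
    ∃ B : Matrix m n ℝ, Bᵀ * B = 1 ∧ Submodule.span ℝ (Set.range fun j => toLp 2 (Bᵀ j)) = U := by
  let b := (stdOrthonormalBasis ℝ U).reindex (Fintype.equivFinOfCardEq hU.symm).symm
  let B : Matrix m n ℝ := fun i j => (b j : EuclideanSpace ℝ m) i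
  have hB : Bᵀ * B = 1 :=
    orthonormal_cols_iff.mp (b.orthonormal.comp_linearIsometry U.subtypeₗᵢ)
  exact ⟨B, hB, span_cols_eq_of_orthonormal hB hU fun j => (b j).2⟩

namespace IsHermitian

variable {n : Type*} [Fintype n] [DecidableEq n] {A : Matrix n n ℝ} (hA : A.IsHermitian)

lemma transpose_eigenvectorUnitary_mul_self :
    (hA.eigenvectorUnitary : Matrix n n ℝ)ᵀ * hA.eigenvectorUnitary = 1 := by
  simpa [star_eq_conjTranspose] using Unitary.star_mul_self_of_mem hA.eigenvectorUnitary.2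

lemma cfc_eq_mul_diagonal (f : ℝ → ℝ) :
    hA.cfc f = hA.eigenvectorUnitary * diagonal (f ∘ hA.eigenvalues) *
      (hA.eigenvectorUnitary : Matrix n n ℝ)ᵀ := by
  simp [IsHermitian.cfc, Unitary.conjStarAlgAut_apply, star_eq_conjTranspose]

lemma cfc_congr {f g : ℝ → ℝ} (hfg : ∀ i, f (hA.eigenvalues i) = g (hA.eigenvalues i)) :
    hA.cfc f = hA.cfc g := by
  simp only [cfc_eq_mul_diagonal, Function.comp_def, hfg]

lemma cfc_mul_cfc (f g : ℝ → ℝ) : hA.cfc f * hA.cfc g = hA.cfc (f * g) := by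
  simp only [IsHermitian.cfc, ← map_mul, diagonal_mul_diagonal]
  rfl

lemma cfc_sub_cfc (f g : ℝ → ℝ) : hA.cfc f - hA.cfc g = hA.cfc (f - g) := by
  simp only [IsHermitian.cfc, ← map_sub, diagonal_sub]
  rfl

lemma cfc_id : hA.cfc id = A := by
  conv_rhs => rw [hA.spectral_theorem]
  rfl

lemma cfc_one : hA.cfc 1 = 1 := by
  simp [IsHermitian.cfc]

lemma transpose_cfc (f : ℝ → ℝ) : (hA.cfc f)ᵀ = hA.cfc f := by
  simp [cfc_eq_mul_diagonal, transpose_mul, Matrix.mul_assoc]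

lemma frobenius_norm_cfc (f : ℝ → ℝ) : ‖hA.cfc f‖ = ‖toLp 2 (f ∘ hA.eigenvalues)‖ := by
  have hU := hA.transpose_eigenvectorUnitary_mul_self
  rw [cfc_eq_mul_diagonal, Matrix.mul_assoc, frobenius_norm_mul_of_transpose_mul_self hU,
    ← frobenius_norm_transpose, transpose_mul, transpose_transpose,
    frobenius_norm_mul_of_transpose_mul_self hU, diagonal_transpose, frobenius_norm_diagonal]

lemma frobenius_norm_cfc_le {f g : ℝ → ℝ} {c : ℝ} (hc : 0 ≤ c)
    (hfg : ∀ i, |f (hA.eigenvalues i)| ≤ c * |g (hA.eigenvalues i)|) :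
    ‖hA.cfc f‖ ≤ c * ‖hA.cfc g‖ := by
  rw [frobenius_norm_cfc, frobenius_norm_cfc, EuclideanSpace.norm_eq, EuclideanSpace.norm_eq,
    ← Real.sqrt_sq hc, ← Real.sqrt_mul (sq_nonneg _), Finset.mul_sum]
  gcongr with i
  simpa [mul_pow, sq_abs] using pow_le_pow_left₀ (abs_nonneg _) (hfg i) 2

end IsHermitian

lemma isHermitian_transpose_mul_self [Fintype m] (V : Matrix m n ℝ) : (Vᵀ * V).IsHermitian := by
  simpa using isHermitian_conjTranspose_mul_self V

lemma le_eigenvalues_transpose_mul_self [Fintype m] [Fintype n] [DecidableEq n]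
    {V : Matrix m n ℝ} {c : ℝ} (hc : 0 ≤ c)
    (hV : ∀ x, c * ‖toLp 2 x‖ ≤ ‖toLp 2 (V *ᵥ x)‖) (i : n) :
    c ^ 2 ≤ (isHermitian_transpose_mul_self V).eigenvalues i := by
  set hG := isHermitian_transpose_mul_self V
  set v := hG.eigenvectorBasis i
  have hv : ‖v‖ = 1 := hG.eigenvectorBasis.orthonormal.1 i
  have heig : hG.eigenvalues i = ‖toLp 2 (V *ᵥ ofLp v)‖ ^ 2 := by
    rw [hG.eigenvalues_eq, ← real_inner_self_eq_norm_sq, EuclideanSpace.inner_toLp_toLp,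
      ← mulVec_mulVec, dotProduct_mulVec, vecMul_transpose]
    simp only [star_trivial, RCLike.re_to_real, v]
  simpa [heig, hv] using pow_le_pow_left₀ (by positivity) (hV (ofLp v)) 2

lemma abs_inv_sqrt_sub_one_le {t : ℝ} (ht : 9 / 16 ≤ t) : |(√t)⁻¹ - 1| ≤ |t - 1| := by
  obtain ⟨s, hs, rfl⟩ : ∃ s : ℝ, 3 / 4 ≤ s ∧ t = s ^ 2 :=
    ⟨√t, Real.le_sqrt_of_sq_le (by linarith), (Real.sq_sqrt (by linarith)).symm⟩
  have hs0 : 0 < s := by linarith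
  rw [Real.sqrt_sq hs0.le, show s⁻¹ - 1 = (1 - s) / s by field_simp,
    show s ^ 2 - 1 = (1 - s) * -(s + 1) by ring, abs_div, abs_mul, abs_neg, abs_of_pos hs0,
    abs_of_pos (by linarith : 0 < s + 1), div_le_iff₀ hs0]
  nlinarith [abs_nonneg (1 - s)]

/-- For injective `V`, `V * gramInvSqrt V` is the orthogonal factor in the polar decomposition
of `V`. -/
noncomputable def gramInvSqrt [Fintype m] [Fintype n] [DecidableEq n] (V : Matrix m n ℝ) :
    Matrix n n ℝ :=
  (isHermitian_transpose_mul_self V).cfc fun t => (√t)⁻¹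

section gramInvSqrt

variable [Fintype m] [Fintype n] [DecidableEq n] {V : Matrix m n ℝ}

lemma transpose_mul_self_mul_gramInvSqrt
    (hpos : ∀ i, 0 < (isHermitian_transpose_mul_self V).eigenvalues i) :
    (V * gramInvSqrt V)ᵀ * (V * gramInvSqrt V) = 1 := by
  set hG := isHermitian_transpose_mul_self V
  calc (V * gramInvSqrt V)ᵀ * (V * gramInvSqrt V)
      = gramInvSqrt V * hG.cfc id * gramInvSqrt V := by
        rw [hG.cfc_id, gramInvSqrt, transpose_mul, hG.transpose_cfc]
        simp only [Matrix.mul_assoc]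
    _ = 1 := by
        rw [gramInvSqrt, hG.cfc_mul_cfc, hG.cfc_mul_cfc, ← hG.cfc_one]
        refine hG.cfc_congr fun i => ?_
        have hs := Real.sqrt_pos.mpr (hpos i)
        simp only [Pi.mul_apply, id, Pi.one_apply]
        field_simp
        rw [Real.sq_sqrt (hpos i).le]

lemma frobenius_norm_gramInvSqrt_sub_one_le
    (h : ∀ i, 9 / 16 ≤ (isHermitian_transpose_mul_self V).eigenvalues i) :
    ‖gramInvSqrt V - 1‖ ≤ ‖Vᵀ * V - 1‖ := by
  set hG := isHermitian_transpose_mul_self V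
  have hG1 : Vᵀ * V - 1 = hG.cfc (id - 1) := by rw [← hG.cfc_sub_cfc, hG.cfc_id, hG.cfc_one]
  rw [hG1, gramInvSqrt, ← hG.cfc_one, hG.cfc_sub_cfc, ← one_mul ‖hG.cfc (id - 1)‖]
  exact hG.frobenius_norm_cfc_le zero_le_one fun i => by
    simpa using abs_inv_sqrt_sub_one_le (h i)

lemma frobenius_norm_gramInvSqrt_le
    (h : ∀ i, 9 / 16 ≤ (isHermitian_transpose_mul_self V).eigenvalues i) :
    ‖gramInvSqrt V‖ ≤ 4 / 3 * √(Fintype.card n) := by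
  set hG := isHermitian_transpose_mul_self V
  rw [← frobenius_norm_one, ← hG.cfc_one]
  refine hG.frobenius_norm_cfc_le (by norm_num) fun i => ?_
  have hs : 3 / 4 ≤ √(hG.eigenvalues i) := Real.le_sqrt_of_sq_le (by linarith [h i])
  rw [Pi.one_apply, abs_one, mul_one, abs_of_pos (by positivity)]
  simpa using inv_anti₀ (by norm_num) hs

end gramInvSqrt

section perturbation

variable [Fintype m] [Fintype n] [DecidableEq n] {B : Matrix m n ℝ} {E : Matrix m m ℝ}

lemma nine_div_sixteen_le_eigenvalues (hB : Bᵀ * B = 1) (hE : ‖E‖ ≤ 1 / 4) (i : n) :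
    9 / 16 ≤ (isHermitian_transpose_mul_self (B + E * B)).eigenvalues i := by
  refine le_trans (by norm_num) (le_eigenvalues_transpose_mul_self (c := 3 / 4) (by norm_num)
    (fun x => ?_) i)
  have hEBx := norm_mulVec_le_frobenius E (B *ᵥ x)
  rw [norm_mulVec_of_transpose_mul_self hB] at hEBx
  have hsplit : (B + E * B) *ᵥ x = B *ᵥ x + E *ᵥ (B *ᵥ x) := by
    rw [add_mulVec, mulVec_mulVec]
  have := norm_le_add_norm_add (toLp 2 (B *ᵥ x)) (toLp 2 (E *ᵥ (B *ᵥ x)))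
  rw [norm_mulVec_of_transpose_mul_self hB, ← toLp_add, ← hsplit] at this
  nlinarith [norm_nonneg (toLp 2 x)]

theorem frobenius_norm_mul_gramInvSqrt_sub_le (hB : Bᵀ * B = 1) (hE : ‖E‖ ≤ 1 / 4) :
    ‖(B + E * B) * gramInvSqrt (B + E * B) - B‖ ≤ 4 * Fintype.card n * ‖E‖ := by
  set S := gramInvSqrt (B + E * B)
  set r := √(Fintype.card n : ℝ)
  have heig := nine_div_sixteen_le_eigenvalues hB hE
  have hcard : (Fintype.card n : ℝ) = r ^ 2 := (Real.sq_sqrt (Nat.cast_nonneg _)).symm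
  have hr : 0 ≤ r := Real.sqrt_nonneg _
  have hE0 : 0 ≤ ‖E‖ := norm_nonneg E
  have hnB : ‖B‖ = r := frobenius_norm_of_transpose_mul_self hB
  have hEB : ‖E * B‖ ≤ ‖E‖ * r := hnB ▸ frobenius_norm_mul E B
  have hS : ‖S‖ ≤ 4 / 3 * r := frobenius_norm_gramInvSqrt_le heig
  have hgram : ‖(B + E * B)ᵀ * (B + E * B) - 1‖ ≤ 9 / 4 * Fintype.card n * ‖E‖ := by
    have hexpand : (B + E * B)ᵀ * (B + E * B) - 1 =
        Bᵀ * (E * B) + (E * B)ᵀ * B + (E * B)ᵀ * (E * B) := by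
      rw [transpose_add, Matrix.add_mul, Matrix.mul_add, Matrix.mul_add, hB]
      abel
    have h1 := frobenius_norm_mul Bᵀ (E * B)
    have h2 := frobenius_norm_mul (E * B)ᵀ B
    have h3 := frobenius_norm_mul (E * B)ᵀ (E * B)
    rw [frobenius_norm_transpose, hnB] at h1 h2
    rw [frobenius_norm_transpose] at h3
    grw [hexpand, norm_add_le, norm_add_le, h1, h2, h3, hEB, hcard]
    nlinarith [mul_le_mul_of_nonneg_left hEB (by positivity : 0 ≤ ‖E‖ * r),
      mul_nonneg (mul_nonneg hE0 (sq_nonneg r)) (by linarith : 0 ≤ 1 / 4 - ‖E‖)]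
  have hS1 : ‖S - 1‖ ≤ 9 / 4 * Fintype.card n * ‖E‖ :=
    (frobenius_norm_gramInvSqrt_sub_one_le heig).trans hgram
  calc ‖(B + E * B) * S - B‖ = ‖E * B * S + B * (S - 1)‖ := by
        congr 1
        rw [Matrix.add_mul, Matrix.mul_sub, Matrix.mul_one]
        abel
    _ ≤ ‖E * B‖ * ‖S‖ + ‖S - 1‖ := by
        grw [norm_add_le, frobenius_norm_mul, frobenius_norm_mul_of_transpose_mul_self hB]
    _ ≤ ‖E‖ * r * (4 / 3 * r) + 9 / 4 * Fintype.card n * ‖E‖ := by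
        grw [hEB, hS, hS1]
    _ ≤ 4 * Fintype.card n * ‖E‖ := by
        rw [hcard]
        nlinarith [mul_nonneg hE0 (sq_nonneg r)]

end perturbation

end Matrix

lemma projMat_eq_toMatrix (n : ℕ) (U : Submodule ℝ (EuclideanSpace ℝ (Fin n))) :
    projMat n U = LinearMap.toMatrix (PiLp.basisFun 2 ℝ (Fin n)) (PiLp.basisFun 2 ℝ (Fin n))
      U.starProjection.toLinearMap := by
  ext i j
  rw [LinearMap.toMatrix_apply, PiLp.basisFun_repr, PiLp.basisFun_apply]
  rfl

lemma projMat_mulVec (n : ℕ) (U : Submodule ℝ (EuclideanSpace ℝ (Fin n))) (x : Fin n → ℝ) :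
    toLp 2 (projMat n U *ᵥ x) = U.starProjection (toLp 2 x) := by
  rw [← toLpLin_apply, projMat_eq_toMatrix, toLpLin_eq_toLin, toLin_toMatrix]
  rfl

lemma projMat_mul_col {p : Type*} {n : ℕ} (U : Submodule ℝ (EuclideanSpace ℝ (Fin n)))
    (M : Matrix (Fin n) p ℝ) (j : p) :
    toLp 2 ((projMat n U * M)ᵀ j) = U.starProjection (toLp 2 (Mᵀ j)) :=
  projMat_mulVec n U (Mᵀ j)

lemma projMat_mul_of_cols_mem {p : Type*} {n : ℕ} {U : Submodule ℝ (EuclideanSpace ℝ (Fin n))}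
    {M : Matrix (Fin n) p ℝ} (hM : ∀ j, toLp 2 (Mᵀ j) ∈ U) : projMat n U * M = M := by
  ext i j
  have := congrArg (fun v : EuclideanSpace ℝ (Fin n) => v i) (projMat_mul_col U M j)
  simpa [U.starProjection_eq_self_iff.mpr (hM j)] using this

/-- Close subspaces admit close orthonormal bases: there is a universal
constant `C > 0` such that for any `d`-dimensional subspaces `W, W̃ ≤ ℝⁿ` with
`‖proj(W) − proj(W̃)‖_F ≤ 1`, there are matrices `B, B̃` with orthonormal
columns spanning `W` and `W̃` respectively such that
`‖B̃ − B‖_F ≤ C·d·‖proj(W̃) − proj(W)‖_F`. -/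
theorem close_subspaces_close_bases :
    ∃ C : ℝ, 0 < C ∧
      ∀ (n d : ℕ) (W Wt : Submodule ℝ (EuclideanSpace ℝ (Fin n))),
        Module.finrank ℝ W = d → Module.finrank ℝ Wt = d →
        frobNorm (projMat n W - projMat n Wt) ≤ 1 →
        ∃ B Bt : Matrix (Fin n) (Fin d) ℝ,
          Bᵀ * B = 1 ∧ Btᵀ * Bt = 1 ∧
          Submodule.span ℝ (Set.range fun j : Fin d =>
            ((WithLp.equiv 2 (Fin n → ℝ)).symm (fun i => B i j) :
              EuclideanSpace ℝ (Fin n))) = W ∧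
          Submodule.span ℝ (Set.range fun j : Fin d =>
            ((WithLp.equiv 2 (Fin n → ℝ)).symm (fun i => Bt i j) :
              EuclideanSpace ℝ (Fin n))) = Wt ∧
          frobNorm (Bt - B) ≤ C * d * frobNorm (projMat n Wt - projMat n W) := by
  refine ⟨8, by norm_num, fun n d W Wt hW hWt _ => ?_⟩
  rw [← Fintype.card_fin d] at hW hWt
  obtain ⟨B, hB, hspanB⟩ := exists_orthonormal_cols_span_eq W hW
  simp only [frobNorm_eq_norm]
  set E := projMat n Wt - projMat n W
  have hE0 : 0 ≤ ‖E‖ := norm_nonneg E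
  by_cases hE : ‖E‖ ≤ 1 / 4
  · have hV : projMat n Wt * B = B + E * B := by
      rw [Matrix.sub_mul, projMat_mul_of_cols_mem (U := W) fun j => hspanB ▸ Submodule.subset_span ⟨j, rfl⟩]
      abel
    have hBt := transpose_mul_self_mul_gramInvSqrt fun i =>
      lt_of_lt_of_le (by norm_num) (nine_div_sixteen_le_eigenvalues hB hE i)
    refine ⟨B, _, hB, hBt, hspanB, span_cols_eq_of_orthonormal hBt hWt fun j => ?_, ?_⟩
    · rw [← hV, Matrix.mul_assoc, projMat_mul_col]
      exact Wt.starProjection_apply_mem _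
    · have := frobenius_norm_mul_gramInvSqrt_sub_le hB hE
      rw [Fintype.card_fin] at this
      nlinarith [mul_nonneg (Nat.cast_nonneg d : (0 : ℝ) ≤ d) hE0]
  · obtain ⟨Bt, hBt, hspanBt⟩ := exists_orthonormal_cols_span_eq Wt hWt
    refine ⟨B, Bt, hB, hBt, hspanB, hspanBt, ?_⟩
    have := frobenius_norm_sub_le_of_transpose_mul_self hB hBt
    rw [Fintype.card_fin] at this
    nlinarith [mul_nonneg (Nat.cast_nonneg d : (0 : ℝ) ≤ d) hE0]
end
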